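/- arXiv:2602.17253 — 4 statements merged into one kernel-verified Lean document; each statement's English description precedes it below -/
import Mathlib

section
/- Let A be an integer m×s matrix such that the polytope P_A = conv{±v : v a column of A} has exactly 2s vertices. Then P_A is combinatorially equivalent to an s-dimensional crosspolytope if and only if A has rank s. -/
open Matrix BigOperators Pointwise

/-- An abstract simplicial complex on vertex set `Fin n`. -/
structure SC (n : ℕ) where
  faces : Finset (Finset (Fin n))
  down_closed : ∀ σ ∈ faces, ∀ τ, τ ⊆ σ → τ.Nonempty → τ ∈ faces
  face_nonempty : ∀ σ ∈ faces, σ.Nonempty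

namespace SC

variable {n : ℕ}

/-- `K` is `d`-dimensional. -/
def dimIs (K : SC n) (d : ℕ) : Prop :=
  (∀ σ ∈ K.faces, σ.card ≤ d + 1) ∧ ∃ σ ∈ K.faces, σ.card = d + 1

/-- `K` is pure of dimension `d`. -/
def pure (K : SC n) (d : ℕ) : Prop :=
  ∀ σ ∈ K.faces, ∃ τ ∈ K.faces, σ ⊆ τ ∧ τ.card = d + 1

/-- The `j`-dimensional faces of `K`. -/
abbrev fdex (K : SC n) (j : ℕ) : Type := {σ : Finset (Fin n) // σ ∈ K.faces ∧ σ.card = j + 1}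

end SC

/-- Entry of the simplicial boundary matrix: for a codimension-one subface `τ ⊆ σ`,
the sign `(-1)^k` where `k` is the position of the vertex removed from `σ`. -/
def bEntry {n : ℕ} (τ σ : Finset (Fin n)) : ℤ :=
  if τ ⊆ σ ∧ σ.card = τ.card + 1 then
    ∑ v ∈ σ \ τ, (-1 : ℤ) ^ ((σ.filter fun w => w < v).card)
  else 0

/-- The boundary matrix from `(j+1)`-dimensional faces to `j`-dimensional faces,
i.e. the boundary map `∂_{j+2}`… no: `K.B j` is the map `∂` whose columns are indexed
by the `(j+1)`-faces; in homological notation `K.B (d-1)` is `∂_d`. -/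
def SC.B {n : ℕ} (K : SC n) (j : ℕ) : Matrix (K.fdex j) (K.fdex (j + 1)) ℤ :=
  fun τ σ => bEntry τ.1 σ.1

/-- Strong connectivity of a `(j+1)`-dimensional pure complex: any two facets are
connected by a chain of facets successively sharing a ridge. -/
def SC.StronglyConnected {n : ℕ} (K : SC n) (j : ℕ) : Prop :=
  ∀ a b : K.fdex (j + 1),
    Relation.ReflTransGen (fun σ σ' : K.fdex (j + 1) => (σ.1 ∩ σ'.1).card = j + 1) a b

/-- the number of facets (of a `(j+1)`-dimensional complex) containing a given ridge -/
def SC.ridgeDeg {n : ℕ} (K : SC n) (j : ℕ) (τ : K.fdex j) : ℕ :=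
  (Finset.univ.filter fun σ : K.fdex (j + 1) => τ.1 ⊆ σ.1).card

section Poly

variable {ι κ : Type*} [Fintype ι] [Fintype κ]

def dot (x y : ι → ℝ) : ℝ := ∑ i, x i * y i

/-- the columns of `A` and their negatives, as real vectors -/
def colsPM (A : Matrix ι κ ℤ) : Set (ι → ℝ) :=
  {x | ∃ j : κ, x = (fun i => (A i j : ℝ)) ∨ x = fun i => -(A i j : ℝ)}

/-- the centrally symmetric polytope `conv [A | -A]` -/
def symPoly (A : Matrix ι κ ℤ) : Set (ι → ℝ) := convexHull ℝ (colsPM A)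

def intVec (x : ι → ℝ) : Prop := ∀ i, ∃ z : ℤ, x i = (z : ℝ)

def latticePts (P : Set (ι → ℝ)) : Set (ι → ℝ) := {x ∈ P | intVec x}

/-- a set is a lattice polytope iff it is the convex hull of its lattice points -/
def IsLatticePolytope (Q : Set (ι → ℝ)) : Prop := Q = convexHull ℝ (latticePts Q)

/-- the polar dual, taken within the linear span of `P` -/
def polarIn (P : Set (ι → ℝ)) : Set (ι → ℝ) :=
  {y | y ∈ Submodule.span ℝ P ∧ ∀ x ∈ P, dot x y ≤ 1}

/-- `P` is reflexive: its polar dual (within the affine hull of `P`) is a lattice polytope -/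
def IsReflexive (P : Set (ι → ℝ)) : Prop := IsLatticePolytope (polarIn P)

/-- every lattice point of the span of `P` is an integer combination of lattice points of `P` -/
def IsSpanning (P : Set (ι → ℝ)) : Prop :=
  ∀ x : ι → ℝ, intVec x → x ∈ Submodule.span ℝ P →
    x ∈ (Submodule.span ℤ (latticePts P) : Set (ι → ℝ))

/-- the integer decomposition property -/
def IsIDP (P : Set (ι → ℝ)) : Prop :=
  ∀ k : ℕ, ∀ x : ι → ℝ, intVec x → x ∈ (k : ℝ) • P →
    ∃ f : Fin k → (ι → ℝ), (∀ i, f i ∈ latticePts P) ∧ x = ∑ i, f i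

/-- combinatorial equivalence: an inclusion-order isomorphism between the
posets of exposed faces -/
def CombEquiv (P : Set (ι → ℝ)) (Q : Set (κ → ℝ)) : Prop :=
  Nonempty ({F : Set (ι → ℝ) // IsExposed ℝ P F} ≃o {F : Set (κ → ℝ) // IsExposed ℝ Q F})

/-- unimodular equivalence: an affine isomorphism between the affine hulls which
matches up the two polytopes and the lattice points of the affine hulls -/
def UniEquiv (P : Set (ι → ℝ)) (Q : Set (κ → ℝ)) : Prop :=
  ∃ f : (ι → ℝ) →ᵃ[ℝ] (κ → ℝ),
    Set.BijOn f (affineSpan ℝ P : Set (ι → ℝ)) (affineSpan ℝ Q : Set (κ → ℝ)) ∧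
    f '' P = Q ∧
    (∀ x ∈ (affineSpan ℝ P : Set (ι → ℝ)), intVec x → intVec (f x)) ∧
    (∀ y ∈ (affineSpan ℝ Q : Set (κ → ℝ)), intVec y →
      ∃ x ∈ (affineSpan ℝ P : Set (ι → ℝ)), intVec x ∧ f x = y)

/-- the facets of a polytope: the maximal proper exposed faces -/
def polyFacets (P : Set (ι → ℝ)) : Set (Set (ι → ℝ)) :=
  {F | IsExposed ℝ P F ∧ F ⊂ P ∧ ∀ G, IsExposed ℝ P G → F ⊆ G → G ⊂ P → G = F}

/-- independence of a set of columns of a rational matrix -/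
def colsIndep (A : Matrix ι κ ℚ) (S : Set κ) : Prop :=
  LinearIndependent ℚ (fun j : S => (fun i => A i (j : κ)))

/-- `S` is a basis of the column matroid `M[A]` -/
def IsBasisSet (A : Matrix ι κ ℚ) (S : Set κ) : Prop :=
  colsIndep A S ∧ ∀ S' : Set κ, S ⊆ S' → colsIndep A S' → S' = S

end Poly

/-- the standard cross-polytope -/
def stdCross (s : ℕ) : Set (Fin s → ℝ) :=
  convexHull ℝ {x | ∃ i : Fin s, x = Pi.single i 1 ∨ x = Pi.single i (-1)}

/-- a signed incidence matrix of the cycle on `n` vertices: column `j` is `e_{j+1} - e_j` -/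
def cycMat (n : ℕ) : Matrix (Fin n) (Fin n) ℤ :=
  fun i j => (if (i : ℕ) = ((j : ℕ) + 1) % n then 1 else 0) - (if i = j then 1 else 0)

/-- a signed incidence matrix of the facet-ridge graph of a `(j+1)`-dimensional
pseudomanifold without boundary: rows are facets, columns are ridges, and the two
facets containing a ridge receive opposite signs. -/
noncomputable def SC.frg {n : ℕ} (K : SC n) (j : ℕ) :
    Matrix (K.fdex (j + 1)) (K.fdex j) ℤ :=
  fun σ τ =>
    if τ.1 ⊆ σ.1 then
      (if ∀ σ' : K.fdex (j + 1), τ.1 ⊆ σ'.1 → σ' ≠ σ →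
          (σ'.1 \ τ.1).min ≤ (σ.1 \ τ.1).min then 1 else -1)
    else 0

/-!
If `A` has rank `s`, then `x ↦ A x` is injective and maps the standard crosspolytope onto `P_A`;
an injective linear map with a continuous left inverse identifies the exposed faces of a set with
those of its image. Conversely, the crosspolytope has a strict chain of `s + 1` nonempty exposed
faces `conv{e₀} ⊂ conv{e₀, e₁} ⊂ ⋯ ⊂ conv{e₀, …, e_{s-1}} ⊂ ◇ₛ`. An order isomorphism of face
posets carries it to such a chain in `P_A`, and along a strict chain of exposed faces the dimension
of the affine hull strictly increases, so `s ≤ dim P_A ≤ rank A`. The ranks over `ℚ` and over `ℝ`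
agree because both equal `s` exactly when `det (Aᵀ A) ≠ 0`.
-/

open Module

namespace Matrix

variable {n K : Type*} [Fintype n] [DecidableEq n] [Field K]

theorem rank_eq_card_iff_isUnit (M : Matrix n n K) :
    M.rank = Fintype.card n ↔ IsUnit M := by
  refine ⟨fun h => ?_, M.rank_of_isUnit⟩
  have hrange : LinearMap.range M.mulVecLin = ⊤ :=
    Submodule.eq_top_of_finrank_eq (by rw [finrank_pi, ← h, rank])
  exact mulVec_surjective_iff_isUnit.mp (LinearMap.range_eq_top.mp hrange)

theorem rank_map_intCast_eq_card_iff [CharZero K] (B : Matrix n n ℤ) :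
    (B.map (Int.cast : ℤ → K)).rank = Fintype.card n ↔ B.det ≠ 0 := by
  rw [rank_eq_card_iff_isUnit, isUnit_iff_isUnit_det, isUnit_iff_ne_zero,
    ← Int.cast_ne_zero (α := K), Int.cast_det]

theorem rank_map_intCast_eq_card_width_iff {m : Type*} [Fintype m] [LinearOrder K]
    [IsStrictOrderedRing K] (A : Matrix m n ℤ) :
    (A.map (Int.cast : ℤ → K)).rank = Fintype.card n ↔ (Aᵀ * A).det ≠ 0 := by
  rw [← rank_transpose_mul_self, ← rank_map_intCast_eq_card_iff (K := K)]
  congr! 2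
  exact (Matrix.map_mul (f := Int.castRingHom K)).symm

end Matrix

section ExposedFaces

variable {E F : Type*} [AddCommMonoid E] [Module ℝ E] [TopologicalSpace E]
  [AddCommMonoid F] [Module ℝ F] [TopologicalSpace F]

theorem isExposed_setOf_eq_of_forall_le {A : Set E} (l : E →L[ℝ] ℝ) {c : ℝ}
    (hl : ∀ x ∈ A, l x ≤ c) :
    IsExposed ℝ A {x ∈ A | l x = c} := by
  rintro ⟨x₀, hx₀A, hx₀⟩
  refine ⟨l, Set.ext fun x => and_congr_right fun hx => ⟨fun h y hy => h ▸ hl y hy, fun h => ?_⟩⟩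
  exact le_antisymm (hl x hx) (hx₀ ▸ h x₀ hx₀A)

theorem IsExposed.image_of_leftInvOn {A B : Set E} (hB : IsExposed ℝ A B) (T : E →L[ℝ] F)
    {g : F →L[ℝ] E} (hg : Set.LeftInvOn g T A) : IsExposed ℝ (T '' A) (T '' B) := by
  rintro hne
  obtain ⟨l, rfl⟩ := hB (Set.image_nonempty.mp hne)
  refine ⟨l.comp g, Set.ext fun y => ⟨?_, ?_⟩⟩
  · rintro ⟨x, ⟨hxA, hxmax⟩, rfl⟩
    refine ⟨Set.mem_image_of_mem T hxA, ?_⟩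
    rintro _ ⟨x', hx'A, rfl⟩
    simpa [hg hxA, hg hx'A] using hxmax x' hx'A
  · rintro ⟨⟨x, hxA, rfl⟩, hmax⟩
    refine ⟨x, ⟨hxA, fun x' hx'A => ?_⟩, rfl⟩
    simpa [hg hxA, hg hx'A] using hmax (T x') (Set.mem_image_of_mem T hx'A)

theorem IsExposed.preimage_inter {A : Set E} {C : Set F} (T : E →L[ℝ] F)
    (hC : IsExposed ℝ (T '' A) C) : IsExposed ℝ A (T ⁻¹' C ∩ A) := by
  rintro ⟨x, hxC, -⟩
  obtain ⟨l, rfl⟩ := hC ⟨T x, hxC⟩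
  refine ⟨l.comp T, Set.ext fun u => ?_⟩
  simp only [Set.mem_inter_iff, Set.mem_preimage, Set.mem_ofPred_eq, Set.forall_mem_image,
    ContinuousLinearMap.comp_apply]
  exact ⟨fun ⟨⟨_, hmax⟩, huA⟩ => ⟨huA, hmax⟩,
    fun ⟨huA, hmax⟩ => ⟨⟨Set.mem_image_of_mem T huA, hmax⟩, huA⟩⟩

theorem nonempty_orderIso_isExposed_image (A : Set E) (T : E →L[ℝ] F) {g : F →L[ℝ] E}
    (hg : Set.LeftInvOn g T A) :
    Nonempty ({B // IsExposed ℝ A B} ≃o {C // IsExposed ℝ (T '' A) C}) :=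
  ⟨{ toFun := fun B => ⟨T '' B, B.2.image_of_leftInvOn T hg⟩
     invFun := fun C => ⟨T ⁻¹' C ∩ A, C.2.preimage_inter T⟩
     left_inv := fun B => Subtype.ext (hg.injOn.preimage_image_inter B.2.subset)
     right_inv := fun C => Subtype.ext <| by
       simpa [Set.image_preimage_inter] using C.2.subset
     map_rel_iff' := fun {B B'} => hg.injOn.image_subset_image_iff B.2.subset B'.2.subset }⟩

end ExposedFaces

section Dimension

variable {E : Type*} [AddCommGroup E] [Module ℝ E] [TopologicalSpace E]

theorem IsExposed.vectorSpan_lt {A B C : Set E} (hB : IsExposed ℝ A B) (hBne : B.Nonempty)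
    (hCA : C ⊆ A) (hBC : B ⊂ C) : vectorSpan ℝ B < vectorSpan ℝ C := by
  obtain ⟨x, hxB⟩ := hBne
  obtain ⟨l, rfl⟩ := hB ⟨x, hxB⟩
  obtain ⟨z, hzC, hzB⟩ := Set.exists_of_ssubset hBC
  have hlz : l z < l x := by
    by_contra! h
    exact hzB ⟨hCA hzC, fun y hy => (hxB.2 y hy).trans h⟩
  have hker : vectorSpan ℝ {x ∈ A | ∀ y ∈ A, l y ≤ l x} ≤ LinearMap.ker (l : E →ₗ[ℝ] ℝ) := by
    rw [vectorSpan_def, Submodule.span_le]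
    rintro _ ⟨u, hu, v, hv, rfl⟩
    simp [le_antisymm (hv.2 u hu.1) (hu.2 v hv.1)]
  refine lt_of_le_of_ne (vectorSpan_mono ℝ hBC.subset) fun h => hlz.ne ?_
  have hzx : z -ᵥ x ∈ vectorSpan ℝ C := vsub_mem_vectorSpan ℝ hzC (hBC.subset hxB)
  have hzx' : l (z - x) = 0 := hker (h ▸ hzx)
  rwa [map_sub, sub_eq_zero] at hzx'

theorem le_finrank_vectorSpan_of_strictMono [FiniteDimensional ℝ E] {A : Set E} :
    ∀ {n : ℕ} (c : Fin (n + 1) → Set E), StrictMono c → (∀ i, IsExposed ℝ A (c i)) →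
      (c 0).Nonempty → n ≤ finrank ℝ (vectorSpan ℝ (c (Fin.last n)))
  | 0, _, _, _, _ => Nat.zero_le _
  | n + 1, c, hc, hexp, h0 => by
    have ih := le_finrank_vectorSpan_of_strictMono (c ∘ Fin.castSucc)
      (hc.comp Fin.strictMono_castSucc) (fun i => hexp _) h0
    have hne : (c (Fin.last n).castSucc).Nonempty := h0.mono (hc.monotone (Fin.zero_le _))
    have hlt := Submodule.finrank_lt_finrank_of_lt <|
      (hexp _).vectorSpan_lt hne (hexp _).subset (hc (Fin.castSucc_lt_last _))
    simp only [Function.comp_apply] at ih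
    omega

end Dimension

section CrossPolytope

variable {s : ℕ}

theorem single_mem_stdCross (i : Fin s) (c : ℝ) (hc : c = 1 ∨ c = -1) :
    Pi.single i c ∈ stdCross s := by
  refine subset_convexHull ℝ _ ⟨i, ?_⟩
  rcases hc with rfl | rfl <;> simp

theorem le_one_of_mem_stdCross (l : (Fin s → ℝ) →ₗ[ℝ] ℝ) (hl : ∀ i, |l (Pi.single i 1)| ≤ 1)
    {x : Fin s → ℝ} (hx : x ∈ stdCross s) : l x ≤ 1 := by
  refine convexHull_min ?_ (convex_halfSpace_le l.isLinear 1) hx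
  rintro _ ⟨i, rfl | rfl⟩
  · exact (le_abs_self _).trans (hl i)
  · simpa [Pi.single_neg] using (neg_le_abs _).trans (hl i)

def partialSum (T : Finset (Fin s)) : (Fin s → ℝ) →ₗ[ℝ] ℝ := ∑ j ∈ T, LinearMap.proj j

@[simp]
theorem partialSum_apply (T : Finset (Fin s)) (x : Fin s → ℝ) :
    partialSum T x = ∑ j ∈ T, x j := by
  simp [partialSum]

theorem sum_le_one_of_mem_stdCross (T : Finset (Fin s)) {x : Fin s → ℝ} (hx : x ∈ stdCross s) :
    ∑ j ∈ T, x j ≤ 1 := by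
  simpa using le_one_of_mem_stdCross (partialSum T) (fun i => by
    rw [partialSum_apply, Finset.sum_pi_single']; split_ifs <;> simp) hx

theorem eq_zero_of_mem_stdCross_of_sum_eq_one {T : Finset (Fin s)} {x : Fin s → ℝ}
    (hx : x ∈ stdCross s) (hT : ∑ j ∈ T, x j = 1) {j : Fin s} (hj : j ∉ T) : x j = 0 := by
  have hbound : ∀ ε : ℝ, |ε| = 1 → ∑ i ∈ T, x i + ε * x j ≤ 1 := fun ε hε => by
    have hl := le_one_of_mem_stdCross (partialSum T + ε • LinearMap.proj j) (fun i => by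
      by_cases hij : i = j
      · subst hij; simp [Finset.sum_pi_single', hj, hε]
      · rw [LinearMap.add_apply, LinearMap.smul_apply, LinearMap.proj_apply, partialSum_apply,
          Finset.sum_pi_single', Pi.single_eq_of_ne (Ne.symm hij), smul_zero, add_zero]
        split_ifs <;> simp) hx
    simpa using hl
  have h1 := hbound 1 (by simp)
  have h2 := hbound (-1) (by simp)
  linarith

def crossFace (s : ℕ) (T : Finset (Fin s)) : Set (Fin s → ℝ) :=
  {x ∈ stdCross s | ∑ j ∈ T, x j = 1}

theorem isExposed_crossFace (T : Finset (Fin s)) : IsExposed ℝ (stdCross s) (crossFace s T) := by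
  simpa [crossFace] using isExposed_setOf_eq_of_forall_le
    (LinearMap.toContinuousLinearMap (partialSum T)) fun x hx => by
      simpa using sum_le_one_of_mem_stdCross T hx

theorem crossFace_mono {T T' : Finset (Fin s)} (h : T ⊆ T') : crossFace s T ⊆ crossFace s T' := by
  rintro x ⟨hx, hT⟩
  refine ⟨hx, ?_⟩
  rw [← Finset.sum_subset h fun j _ hj => eq_zero_of_mem_stdCross_of_sum_eq_one hx hT hj, hT]

theorem single_one_mem_crossFace_iff (T : Finset (Fin s)) (i : Fin s) :
    Pi.single i 1 ∈ crossFace s T ↔ i ∈ T := by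
  simp [crossFace, single_mem_stdCross i 1 (Or.inl rfl), Finset.sum_pi_single']

theorem single_neg_one_notMem_crossFace (T : Finset (Fin s)) (i : Fin s) :
    Pi.single i (-1) ∉ crossFace s T := by
  simp only [crossFace, Set.mem_ofPred_eq, Finset.sum_pi_single', not_and]
  split_ifs <;> norm_num

theorem crossFace_ssubset_crossFace {T T' : Finset (Fin s)} (h : T ⊆ T') {i : Fin s}
    (hi : i ∈ T') (hi' : i ∉ T) : crossFace s T ⊂ crossFace s T' :=
  Set.ssubset_iff_of_subset (crossFace_mono h) |>.mpr
    ⟨_, (single_one_mem_crossFace_iff T' i).mpr hi, mt (single_one_mem_crossFace_iff T i).mp hi'⟩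

theorem crossFace_ssubset_stdCross (T : Finset (Fin s)) (i : Fin s) :
    crossFace s T ⊂ stdCross s :=
  Set.ssubset_iff_of_subset (fun _ hx => hx.1) |>.mpr
    ⟨_, single_mem_stdCross i (-1) (Or.inr rfl), single_neg_one_notMem_crossFace T i⟩

def crossChain (s : ℕ) (k : Fin (s + 1)) : Set (Fin s → ℝ) :=
  if (k : ℕ) < s then crossFace s {j | (j : ℕ) ≤ k} else stdCross s

theorem isExposed_crossChain (k : Fin (s + 1)) : IsExposed ℝ (stdCross s) (crossChain s k) := by
  unfold crossChain
  split_ifs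
  · exact isExposed_crossFace _
  · exact IsExposed.refl _

theorem crossChain_strictMono : StrictMono (crossChain s) := by
  refine Fin.strictMono_iff_lt_succ.mpr fun i => ?_
  simp only [crossChain, Fin.val_castSucc, i.is_lt, if_true, Fin.val_succ]
  split_ifs with h
  · exact crossFace_ssubset_crossFace (fun j hj => by
      simp only [Finset.mem_filter, Finset.mem_univ, true_and] at hj ⊢; omega)
      (i := ⟨i + 1, h⟩) (by simp) (by simp [Fin.lt_def])
  · exact crossFace_ssubset_stdCross _ i

theorem crossChain_zero_nonempty (hs : 0 < s) : (crossChain s 0).Nonempty :=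
  ⟨Pi.single ⟨0, hs⟩ 1, by simp [crossChain, hs, single_one_mem_crossFace_iff]⟩

end CrossPolytope

section SymPoly

variable {ι : Type*} {s : ℕ}

theorem symPoly_eq_image_stdCross (A : Matrix ι (Fin s) ℤ) :
    symPoly A = (A.map (Int.cast : ℤ → ℝ)).mulVecLin '' stdCross s := by
  rw [symPoly, stdCross, LinearMap.image_convexHull]
  congr 1
  ext x
  simp only [colsPM, Set.mem_ofPred_eq, Set.mem_image, Matrix.mulVecLin_apply]
  constructor
  · rintro ⟨j, rfl | rfl⟩
    · exact ⟨_, ⟨j, Or.inl rfl⟩, by ext; simp⟩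
    · exact ⟨_, ⟨j, Or.inr rfl⟩, by ext; simp⟩
  · rintro ⟨_, ⟨j, rfl | rfl⟩, rfl⟩
    · exact ⟨j, Or.inl (by ext; simp)⟩
    · exact ⟨j, Or.inr (by ext; simp)⟩

theorem finrank_vectorSpan_symPoly_le_rank [Fintype ι] (A : Matrix ι (Fin s) ℤ) :
    finrank ℝ (vectorSpan ℝ (symPoly A)) ≤ (A.map (Int.cast : ℤ → ℝ)).rank := by
  set T := (A.map (Int.cast : ℤ → ℝ)).mulVecLin
  have hspan : vectorSpan ℝ (symPoly A) = (vectorSpan ℝ (stdCross s)).map T := by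
    rw [symPoly_eq_image_stdCross, ← LinearMap.coe_toAffineMap, ← AffineMap.map_vectorSpan]
    rfl
  rw [hspan]
  exact Submodule.finrank_mono LinearMap.map_le_range

theorem le_rank_of_combEquiv_stdCross [Fintype ι] (A : Matrix ι (Fin s) ℤ)
    (h : CombEquiv (symPoly A) (stdCross s)) : s ≤ (A.map (Int.cast : ℤ → ℝ)).rank := by
  obtain rfl | hs := Nat.eq_zero_or_pos s
  · exact Nat.zero_le _
  obtain ⟨e⟩ := h
  let c (k : Fin (s + 1)) : {F // IsExposed ℝ (stdCross s) F} :=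
    ⟨crossChain s k, isExposed_crossChain k⟩
  let d (k : Fin (s + 1)) : Set (ι → ℝ) := (e.symm (c k)).1
  have hd : StrictMono d := fun a b hab => e.symm.strictMono (crossChain_strictMono hab)
  -- `∅` is an exposed face below every other one, and `e.symm` reflects `≤`
  have hd0 : (d 0).Nonempty := by
    refine Set.nonempty_iff_ne_empty.mpr fun h0 => ?_
    have hle : e.symm (c 0) ≤ e.symm ⟨∅, isExposed_empty⟩ := by
      change d 0 ⊆ _
      simp [h0]
    obtain ⟨x, hx⟩ := crossChain_zero_nonempty hs
    exact e.symm.le_iff_le.mp hle hx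
  calc s ≤ finrank ℝ (vectorSpan ℝ (d (Fin.last s))) :=
        le_finrank_vectorSpan_of_strictMono d hd (fun k => (e.symm (c k)).2) hd0
    _ ≤ finrank ℝ (vectorSpan ℝ (symPoly A)) :=
        Submodule.finrank_mono (vectorSpan_mono ℝ (e.symm _).2.subset)
    _ ≤ _ := finrank_vectorSpan_symPoly_le_rank A

theorem combEquiv_stdCross_of_rank_eq [Fintype ι] (A : Matrix ι (Fin s) ℤ)
    (h : (A.map (Int.cast : ℤ → ℝ)).rank = s) : CombEquiv (symPoly A) (stdCross s) := by
  set T := (A.map (Int.cast : ℤ → ℝ)).mulVecLin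
  have hker : LinearMap.ker T = ⊥ := by
    have hrn := LinearMap.finrank_range_add_finrank_ker T
    rw [← Matrix.rank, h, finrank_fin_fun] at hrn
    exact Submodule.finrank_eq_zero.mp (by omega)
  obtain ⟨g, hg⟩ := T.exists_leftInverse_of_injective hker
  obtain ⟨e⟩ := nonempty_orderIso_isExposed_image (stdCross s) (LinearMap.toContinuousLinearMap T)
    (g := LinearMap.toContinuousLinearMap g) fun x _ => LinearMap.congr_fun hg x
  rw [CombEquiv, symPoly_eq_image_stdCross]
  exact ⟨e.symm⟩

end SymPoly

theorem stmt0_general (m s : ℕ) (A : Matrix (Fin m) (Fin s) ℤ) :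
    CombEquiv (symPoly A) (stdCross s) ↔ (A.map (Int.cast : ℤ → ℚ)).rank = s := by
  have hrank : (A.map (Int.cast : ℤ → ℚ)).rank = s ↔ (A.map (Int.cast : ℤ → ℝ)).rank = s := by
    simpa using (Matrix.rank_map_intCast_eq_card_width_iff (K := ℚ) A).trans
      (Matrix.rank_map_intCast_eq_card_width_iff (K := ℝ) A).symm
  rw [hrank]
  exact ⟨fun h => le_antisymm (Matrix.rank_le_width _) (le_rank_of_combEquiv_stdCross A h),
    combEquiv_stdCross_of_rank_eq A⟩

/-- Let `A` be an integer `m × s` matrix such that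
`P_A = conv{±columns of A}` has exactly `2s` vertices. Then `P_A` is combinatorially
equivalent to an `s`-dimensional crosspolytope iff `A` has rank `s`. -/
theorem stmt0 (m s : ℕ) (A : Matrix (Fin m) (Fin s) ℤ)
    (hv : (Set.extremePoints ℝ (symPoly A)).ncard = 2 * s) :
    CombEquiv (symPoly A) (stdCross s) ↔ (A.map (Int.cast : ℤ → ℚ)).rank = s :=
  stmt0_general m s A
end

section
/- Let Δ be a pure d-dimensional simplicial complex. Then the vertices of the symmetric homology polytope P_Δ are exactly the columns of [∂_d | −∂_d]; in particular P_Δ has exactly 2·f_d(Δ) vertices, and the only lattice point of P_Δ other than its vertices is the origin. -/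
open Matrix BigOperators Pointwise

namespace Stmt7Aux

open Finset

lemma bEntry_sign {n : ℕ} {τ σ : Finset (Fin n)} (h1 : τ ⊆ σ) (h2 : σ.card = τ.card + 1) :
    bEntry τ σ = 1 ∨ bEntry τ σ = -1 := by
  rw [bEntry, if_pos ⟨h1, h2⟩]
  have hc : (σ \ τ).card = 1 := by rw [card_sdiff_of_subset h1, h2]; omega
  obtain ⟨v, hv⟩ := Finset.card_eq_one.mp hc
  rw [hv, Finset.sum_singleton]
  rcases Nat.even_or_odd ((σ.filter fun w => w < v).card) with he | ho
  · exact Or.inl he.neg_one_pow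
  · exact Or.inr ho.neg_one_pow

variable {n j : ℕ} {K : SC n}

lemma B_ne_zero_iff (σ : K.fdex (j+1)) (τ : K.fdex j) :
    K.B j τ σ ≠ 0 ↔ τ.1 ⊆ σ.1 := by
  constructor
  · intro h
    by_contra hs
    exact h (if_neg (by tauto))
  · intro hs
    have h2 : σ.1.card = τ.1.card + 1 := by rw [σ.2.2, τ.2.2]
    rcases bEntry_sign hs h2 with h | h <;> rw [SC.B, h] <;> norm_num

lemma B_sign (σ : K.fdex (j+1)) (τ : K.fdex j) (hs : τ.1 ⊆ σ.1) :
    K.B j τ σ = 1 ∨ K.B j τ σ = -1 :=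
  bEntry_sign hs (by rw [σ.2.2, τ.2.2])

lemma B_vals (σ : K.fdex (j+1)) (τ : K.fdex j) :
    K.B j τ σ = 0 ∨ K.B j τ σ = 1 ∨ K.B j τ σ = -1 := by
  by_cases h : τ.1 ⊆ σ.1
  · exact Or.inr (B_sign σ τ h)
  · left; by_contra h0; exact h ((B_ne_zero_iff σ τ).mp h0)

/-- two distinct common ridges force equality of facets -/
lemma ridge_unique {τ ρ : K.fdex j} {σ σ' : K.fdex (j+1)} (hne : τ ≠ ρ)
    (h1 : τ.1 ⊆ σ.1) (h2 : ρ.1 ⊆ σ.1) (h3 : τ.1 ⊆ σ'.1) (h4 : ρ.1 ⊆ σ'.1) : σ = σ' := by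
  have hne1 : τ.1 ≠ ρ.1 := fun h => hne (Subtype.ext h)
  have hint : (τ.1 ∩ ρ.1).card < j + 1 := by
    have hss : τ.1 ∩ ρ.1 ⊆ τ.1 := Finset.inter_subset_left
    have : τ.1 ∩ ρ.1 ≠ τ.1 := by
      intro h
      have : τ.1 ⊆ ρ.1 := by rw [← h]; exact Finset.inter_subset_right
      exact hne1 (Finset.eq_of_subset_of_card_le this (by rw [τ.2.2, ρ.2.2]))
    calc (τ.1 ∩ ρ.1).card < τ.1.card := Finset.card_lt_card (ssubset_of_subset_of_ne hss this)
      _ = j + 1 := τ.2.2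
  have hcu : j + 2 ≤ (τ.1 ∪ ρ.1).card := by
    have := Finset.card_union_add_card_inter τ.1 ρ.1
    rw [τ.2.2, ρ.2.2] at this
    omega
  have e1 : τ.1 ∪ ρ.1 = σ.1 :=
    Finset.eq_of_subset_of_card_le (Finset.union_subset h1 h2) (by rw [σ.2.2]; exact hcu)
  have e2 : τ.1 ∪ ρ.1 = σ'.1 :=
    Finset.eq_of_subset_of_card_le (Finset.union_subset h3 h4) (by rw [σ'.2.2]; exact hcu)
  exact Subtype.ext (e1 ▸ e2)

/-- every erasure of a vertex of a facet is a ridge of the complex -/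
lemma ridge_of_erase (σ : K.fdex (j+1)) {u : Fin n} (hu : u ∈ σ.1) :
    σ.1.erase u ∈ K.faces ∧ (σ.1.erase u).card = j + 1 := by
  have hcard : (σ.1.erase u).card = j + 1 := by
    rw [Finset.card_erase_of_mem hu, σ.2.2]
    omega
  refine ⟨K.down_closed σ.1 σ.2.1 _ (Finset.erase_subset u σ.1) ?_, hcard⟩
  rw [← Finset.card_pos, hcard]; omega

/-- each facet has two distinct ridges -/
lemma exists_pair_ridges (σ : K.fdex (j+1)) :
    ∃ τ₁ τ₂ : K.fdex j, τ₁ ≠ τ₂ ∧ τ₁.1 ⊆ σ.1 ∧ τ₂.1 ⊆ σ.1 := by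
  have h2 : 1 < σ.1.card := by rw [σ.2.2]; omega
  obtain ⟨u, hu, v, hv, huv⟩ := Finset.one_lt_card.mp h2
  refine ⟨⟨σ.1.erase u, ridge_of_erase σ hu⟩, ⟨σ.1.erase v, ridge_of_erase σ hv⟩, ?_,
    Finset.erase_subset _ _, Finset.erase_subset _ _⟩
  intro h
  have : v ∈ σ.1.erase u := Finset.mem_erase.mpr ⟨fun hh => huv hh.symm, hv⟩
  rw [Subtype.mk.injEq] at h
  rw [h] at this
  exact (Finset.notMem_erase v σ.1) this

/-- for distinct facets, a ridge of one avoiding the other -/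
lemma exists_ridge_avoid {σ σ' : K.fdex (j+1)} (hne : σ ≠ σ') :
    ∃ τ : K.fdex j, τ.1 ⊆ σ.1 ∧ ¬τ.1 ⊆ σ'.1 := by
  have hne1 : σ.1 ≠ σ'.1 := fun h => hne (Subtype.ext h)
  have hnot : ¬σ.1 ⊆ σ'.1 := fun h =>
    hne1 (Finset.eq_of_subset_of_card_le h (by rw [σ.2.2, σ'.2.2]))
  obtain ⟨u, hu, hu'⟩ := Finset.not_subset.mp hnot
  have h2 : 0 < (σ.1.erase u).card := by rw [Finset.card_erase_of_mem hu, σ.2.2]; omega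
  obtain ⟨v, hv⟩ := Finset.card_pos.mp h2
  have hvu : v ≠ u := (Finset.mem_erase.mp hv).1
  have hvσ : v ∈ σ.1 := (Finset.mem_erase.mp hv).2
  refine ⟨⟨σ.1.erase v, ridge_of_erase σ hvσ⟩, Finset.erase_subset _ _, ?_⟩
  intro hsub
  exact hu' (hsub (Finset.mem_erase.mpr ⟨hvu.symm, hu⟩))

/-- weighted sums: equality forces equality on the support -/
lemma sum_eq_support {α : Type*} {S : Finset α} {μ f g : α → ℝ}
    (hμ : ∀ w ∈ S, 0 ≤ μ w) (hle : ∀ w ∈ S, f w ≤ g w)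
    (heq : ∑ w ∈ S, μ w * f w = ∑ w ∈ S, μ w * g w) :
    ∀ w ∈ S, 0 < μ w → f w = g w := by
  intro w hw hμw
  by_contra hne
  have hlt : f w < g w := lt_of_le_of_ne (hle w hw) hne
  have : ∑ w ∈ S, μ w * f w < ∑ w ∈ S, μ w * g w :=
    Finset.sum_lt_sum (fun i hi => mul_le_mul_of_nonneg_left (hle i hi) (hμ i hi))
      ⟨w, hw, by nlinarith⟩
  linarith

end Stmt7Aux


section Main

open Finset

variable {n j : ℕ} {K : SC n}

/-- the real column of the boundary matrix attached to a facet -/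
def kcol (K : SC n) (j : ℕ) (σ : K.fdex (j+1)) : K.fdex j → ℝ :=
  fun τ => ((K.B j) τ σ : ℝ)

/-- the finite set of columns and their negatives -/
noncomputable def SS (K : SC n) (j : ℕ) : Finset (K.fdex j → ℝ) := by
  classical
  exact (Finset.univ.image (kcol K j)) ∪ (Finset.univ.image (fun σ => -kcol K j σ))

lemma colsPM_eq_SS : colsPM (K.B j) = (SS K j : Set (K.fdex j → ℝ)) := by
  classical
  ext x
  simp only [colsPM, Set.mem_setOf_eq, SS, Finset.coe_union, Set.mem_union, Finset.coe_image,
    Set.mem_image, Finset.mem_coe, Finset.coe_univ, Set.image_univ, Set.mem_range]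
  constructor
  · rintro ⟨σ, h | h⟩
    · left; exact ⟨σ, h.symm⟩
    · right; exact ⟨σ, by rw [h]; funext τ; simp [kcol]⟩
  · rintro (⟨σ, rfl⟩ | ⟨σ, rfl⟩)
    · exact ⟨σ, Or.inl rfl⟩
    · exact ⟨σ, Or.inr (by funext τ; simp [kcol])⟩

lemma mem_SS : ∀ x ∈ SS K j, ∃ σ, x = kcol K j σ ∨ x = -kcol K j σ := by
  classical
  intro x hx
  simp only [SS, Finset.mem_union, Finset.mem_image, Finset.mem_univ, true_and] at hx
  rcases hx with ⟨σ, h⟩ | ⟨σ, h⟩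
  exacts [⟨σ, Or.inl h.symm⟩, ⟨σ, Or.inr h.symm⟩]

lemma kcol_mem_SS (σ : K.fdex (j+1)) : kcol K j σ ∈ SS K j := by
  classical
  simp only [SS, Finset.mem_union, Finset.mem_image, Finset.mem_univ, true_and]
  exact Or.inl ⟨σ, rfl⟩

lemma neg_kcol_mem_SS (σ : K.fdex (j+1)) : -kcol K j σ ∈ SS K j := by
  classical
  simp only [SS, Finset.mem_union, Finset.mem_image, Finset.mem_univ, true_and]
  exact Or.inr ⟨σ, rfl⟩

lemma kcol_vals (σ : K.fdex (j+1)) (τ : K.fdex j) :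
    kcol K j σ τ = 0 ∨ kcol K j σ τ = 1 ∨ kcol K j σ τ = -1 := by
  rcases Stmt7Aux.B_vals σ τ with h | h | h <;> simp [kcol, h]

lemma kcol_ne_zero_iff (σ : K.fdex (j+1)) (τ : K.fdex j) :
    kcol K j σ τ ≠ 0 ↔ τ.1 ⊆ σ.1 := by
  rw [kcol, Int.cast_ne_zero]
  exact Stmt7Aux.B_ne_zero_iff σ τ

lemma SS_abs_le : ∀ x ∈ SS K j, ∀ τ, |x τ| ≤ 1 := by
  intro x hx τ
  obtain ⟨σ, rfl | rfl⟩ := mem_SS x hx <;>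
    rcases kcol_vals σ τ with h | h | h <;> simp [h]

lemma SS_rigid : ∀ x ∈ SS K j, ∀ y ∈ SS K j, ∀ τ ρ : K.fdex j, τ ≠ ρ →
    x τ ≠ 0 → y τ ≠ 0 → x ρ ≠ 0 → y ρ ≠ 0 → x = y ∨ x = -y := by
  intro x hx y hy τ ρ hτρ hxτ hyτ hxρ hyρ
  obtain ⟨σ, hxc⟩ := mem_SS x hx
  obtain ⟨σ', hyc⟩ := mem_SS y hy
  have hxτ' : kcol K j σ τ ≠ 0 := by rcases hxc with rfl | rfl; exacts [hxτ, by simpa using hxτ]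
  have hxρ' : kcol K j σ ρ ≠ 0 := by rcases hxc with rfl | rfl; exacts [hxρ, by simpa using hxρ]
  have hyτ' : kcol K j σ' τ ≠ 0 := by rcases hyc with rfl | rfl; exacts [hyτ, by simpa using hyτ]
  have hyρ' : kcol K j σ' ρ ≠ 0 := by rcases hyc with rfl | rfl; exacts [hyρ, by simpa using hyρ]
  have hσ : σ = σ' := Stmt7Aux.ridge_unique hτρ ((kcol_ne_zero_iff σ τ).mp hxτ')
    ((kcol_ne_zero_iff σ ρ).mp hxρ') ((kcol_ne_zero_iff σ' τ).mp hyτ')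
    ((kcol_ne_zero_iff σ' ρ).mp hyρ')
  subst hσ
  rcases hxc with rfl | rfl <;> rcases hyc with rfl | rfl
  · exact Or.inl rfl
  · exact Or.inr (by simp)
  · exact Or.inr rfl
  · exact Or.inl rfl

lemma kcol_dot_self (σ : K.fdex (j+1)) :
    2 ≤ ∑ τ, kcol K j σ τ * kcol K j σ τ := by
  obtain ⟨τ₁, τ₂, hne, h1, h2⟩ := Stmt7Aux.exists_pair_ridges σ
  have ht1 : kcol K j σ τ₁ * kcol K j σ τ₁ = 1 := by
    rcases kcol_vals σ τ₁ with h | h | h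
    · exact absurd h ((kcol_ne_zero_iff σ τ₁).mpr h1)
    · rw [h]; norm_num
    · rw [h]; norm_num
  have ht2 : kcol K j σ τ₂ * kcol K j σ τ₂ = 1 := by
    rcases kcol_vals σ τ₂ with h | h | h
    · exact absurd h ((kcol_ne_zero_iff σ τ₂).mpr h2)
    · rw [h]; norm_num
    · rw [h]; norm_num
  calc (2:ℝ) = ∑ τ ∈ ({τ₁, τ₂} : Finset (K.fdex j)), kcol K j σ τ * kcol K j σ τ := by
        rw [Finset.sum_pair hne, ht1, ht2]; norm_num
    _ ≤ ∑ τ, kcol K j σ τ * kcol K j σ τ :=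
        Finset.sum_le_sum_of_subset_of_nonneg (Finset.subset_univ _)
          (fun i _ _ => mul_self_nonneg _)

lemma kcol_cross (σ σ' : K.fdex (j+1)) (hne : σ' ≠ σ) :
    |∑ τ, kcol K j σ' τ * kcol K j σ τ| ≤ 1 := by
  by_cases hex : ∃ τ₀, kcol K j σ' τ₀ * kcol K j σ τ₀ ≠ 0
  · obtain ⟨τ₀, h0⟩ := hex
    have hsum : ∑ τ, kcol K j σ' τ * kcol K j σ τ = kcol K j σ' τ₀ * kcol K j σ τ₀ := by
      apply Finset.sum_eq_single τ₀
      · intro τ _ hτ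
        by_contra ht
        obtain ⟨ht1, ht2⟩ := mul_ne_zero_iff.mp ht
        obtain ⟨h01, h02⟩ := mul_ne_zero_iff.mp h0
        exact hne (Stmt7Aux.ridge_unique hτ ((kcol_ne_zero_iff σ' τ).mp ht1)
          ((kcol_ne_zero_iff σ' τ₀).mp h01) ((kcol_ne_zero_iff σ τ).mp ht2)
          ((kcol_ne_zero_iff σ τ₀).mp h02))
      · intro h; exact absurd (Finset.mem_univ τ₀) h
    rw [hsum]
    rcases kcol_vals σ' τ₀ with h | h | h <;> rcases kcol_vals σ τ₀ with g | g | g <;>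
      simp [h, g]
  · push_neg at hex
    rw [Finset.sum_eq_zero (fun τ _ => hex τ)]
    norm_num

lemma SS_dot_lt : ∀ v ∈ SS K j, ∀ y ∈ SS K j, y ≠ v →
    ∑ τ, y τ * v τ < ∑ τ, v τ * v τ := by
  intro v hvS y hyS hne
  obtain ⟨σ, hv⟩ := mem_SS v hvS
  obtain ⟨σ', hy⟩ := mem_SS y hyS
  have hc : ∑ τ, v τ * v τ = ∑ τ, kcol K j σ τ * kcol K j σ τ := by
    rcases hv with rfl | rfl
    · rfl
    · exact Finset.sum_congr rfl fun τ _ => by simp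
  have hc2 : 2 ≤ ∑ τ, v τ * v τ := hc ▸ kcol_dot_self σ
  by_cases hσ : σ' = σ
  · subst hσ
    have hyv : y = -v := by
      rcases hv with rfl | rfl <;> rcases hy with rfl | rfl
      · exact absurd rfl hne
      · rfl
      · simp
      · exact absurd rfl hne
    rw [hyv]
    have hns : ∑ τ, (-v) τ * v τ = -∑ τ, v τ * v τ := by
      rw [← Finset.sum_neg_distrib]
      exact Finset.sum_congr rfl fun τ _ => by simp
    rw [hns]
    linarith
  · have habs : |∑ τ, y τ * v τ| = |∑ τ, kcol K j σ' τ * kcol K j σ τ| := by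
      rcases hv with rfl | rfl <;> rcases hy with rfl | rfl
      · rfl
      · rw [← abs_neg, ← Finset.sum_neg_distrib]
        congr 1
        exact Finset.sum_congr rfl fun τ _ => by simp
      · rw [← abs_neg, ← Finset.sum_neg_distrib]
        congr 1
        exact Finset.sum_congr rfl fun τ _ => by simp
      · congr 1
        exact Finset.sum_congr rfl fun τ _ => by simp [neg_mul_neg]
    have h1 : |∑ τ, y τ * v τ| ≤ 1 := habs ▸ kcol_cross σ σ' hσ
    calc ∑ τ, y τ * v τ ≤ 1 := le_of_abs_le h1
      _ < 2 := one_lt_two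
      _ ≤ _ := hc2

lemma SS_rep : ∀ x ∈ convexHull ℝ (SS K j : Set (K.fdex j → ℝ)),
    ∃ μ : (K.fdex j → ℝ) → ℝ, (∀ y ∈ SS K j, 0 ≤ μ y) ∧ ∑ y ∈ SS K j, μ y = 1 ∧
      ∀ τ, x τ = ∑ y ∈ SS K j, μ y * y τ := by
  intro x hx
  rw [Finset.convexHull_eq] at hx
  obtain ⟨μ, hμ0, hμ1, hμx⟩ := hx
  refine ⟨μ, hμ0, hμ1, fun τ => ?_⟩
  rw [← hμx, Finset.centerMass_eq_of_sum_1 _ _ hμ1, Finset.sum_apply]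
  exact Finset.sum_congr rfl fun y _ => by simp

lemma SS_max : ∀ v ∈ SS K j, ∀ x ∈ convexHull ℝ (SS K j : Set (K.fdex j → ℝ)),
    (∑ τ, x τ * v τ) ≤ (∑ τ, v τ * v τ) ∧
      ((∑ τ, x τ * v τ) = (∑ τ, v τ * v τ) → x = v) := by
  intro v hvS x hx
  obtain ⟨μ, hμ0, hμ1, hμx⟩ := SS_rep x hx
  have hLx : ∑ τ, x τ * v τ = ∑ y ∈ SS K j, μ y * (∑ τ, y τ * v τ) := by
    calc ∑ τ, x τ * v τ = ∑ τ, (∑ y ∈ SS K j, μ y * y τ) * v τ :=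
          Finset.sum_congr rfl fun τ _ => by rw [hμx τ]
      _ = ∑ τ, ∑ y ∈ SS K j, μ y * y τ * v τ :=
          Finset.sum_congr rfl fun τ _ => Finset.sum_mul _ _ _
      _ = ∑ y ∈ SS K j, ∑ τ, μ y * y τ * v τ := Finset.sum_comm
      _ = ∑ y ∈ SS K j, μ y * (∑ τ, y τ * v τ) := Finset.sum_congr rfl fun y _ => by
          rw [Finset.mul_sum]
          exact Finset.sum_congr rfl fun τ _ => mul_assoc _ _ _
  have hterm : ∀ y ∈ SS K j, (∑ τ, y τ * v τ) ≤ ∑ τ, v τ * v τ := by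
    intro y hy
    by_cases h : y = v
    · rw [h]
    · exact le_of_lt (SS_dot_lt v hvS y hy h)
  constructor
  · rw [hLx]
    calc ∑ y ∈ SS K j, μ y * (∑ τ, y τ * v τ) ≤ ∑ y ∈ SS K j, μ y * (∑ τ, v τ * v τ) :=
          Finset.sum_le_sum (fun y hy => mul_le_mul_of_nonneg_left (hterm y hy) (hμ0 y hy))
      _ = ∑ τ, v τ * v τ := by rw [← Finset.sum_mul, hμ1, one_mul]
  · intro heq
    have heq' : ∑ y ∈ SS K j, μ y * (∑ τ, y τ * v τ)
        = ∑ y ∈ SS K j, μ y * (∑ τ, v τ * v τ) := by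
      rw [← hLx, heq, ← Finset.sum_mul, hμ1, one_mul]
    have hsupp := Stmt7Aux.sum_eq_support hμ0 hterm heq'
    have hyv : ∀ y ∈ SS K j, 0 < μ y → y = v := by
      intro y hy hμy
      by_contra hne
      exact absurd (hsupp y hy hμy) (ne_of_lt (SS_dot_lt v hvS y hy hne))
    funext τ
    rw [hμx τ]
    have hcong : ∀ y ∈ SS K j, μ y * y τ = μ y * v τ := by
      intro y hy
      rcases eq_or_lt_of_le (hμ0 y hy) with h | h
      · rw [← h, zero_mul, zero_mul]
      · rw [hyv y hy h]
    rw [Finset.sum_congr rfl hcong, ← Finset.sum_mul, hμ1, one_mul]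

end Main

/-- For a pure `d`-dimensional simplicial complex (`d = j+1 ≥ 1`),
the vertices of `P_Δ` are exactly the columns of `[∂_d | −∂_d]`, there are `2·f_d(Δ)`
of them, and the only other lattice point of `P_Δ` is the origin. -/
theorem stmt7 (n j : ℕ) (K : SC n) (hdim : K.dimIs (j + 1)) (hpure : K.pure (j + 1)) :
    Set.extremePoints ℝ (symPoly (K.B j)) = colsPM (K.B j) ∧
      (colsPM (K.B j)).ncard = 2 * Fintype.card (K.fdex (j + 1)) ∧
      latticePts (symPoly (K.B j)) = colsPM (K.B j) ∪ {0} := by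
  classical
  obtain ⟨-, σ₀f, hσ₀f, hσ₀c⟩ := hdim
  let σ₀ : K.fdex (j+1) := ⟨σ₀f, hσ₀f, hσ₀c⟩
  have hS : colsPM (K.B j) = (SS K j : Set (K.fdex j → ℝ)) := colsPM_eq_SS
  have hsym : symPoly (K.B j) = convexHull ℝ (SS K j : Set (K.fdex j → ℝ)) := by
    rw [symPoly, hS]
  have hinj : Function.Injective (kcol K j) := by
    intro σ σ' h
    by_contra hne
    obtain ⟨τ, hτ, hτ'⟩ := Stmt7Aux.exists_ridge_avoid hne
    have h1 : kcol K j σ τ ≠ 0 := (kcol_ne_zero_iff σ τ).mpr hτ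
    have h2 : kcol K j σ' τ = 0 := by
      by_contra hh; exact hτ' ((kcol_ne_zero_iff σ' τ).mp hh)
    rw [h] at h1; exact h1 h2
  have hne_col_neg : ∀ σ σ' : K.fdex (j+1), kcol K j σ ≠ -kcol K j σ' := by
    intro σ σ' h
    by_cases hss : σ = σ'
    · subst hss
      obtain ⟨τ₁, τ₂, h12, hs1, hs2⟩ := Stmt7Aux.exists_pair_ridges σ
      have h1 : kcol K j σ τ₁ ≠ 0 := (kcol_ne_zero_iff σ τ₁).mpr hs1
      have := congrFun h τ₁
      simp only [Pi.neg_apply] at this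
      apply h1; linarith
    · obtain ⟨τ, hτ, hτ'⟩ := Stmt7Aux.exists_ridge_avoid hss
      have h1 : kcol K j σ τ ≠ 0 := (kcol_ne_zero_iff σ τ).mpr hτ
      have h2 : kcol K j σ' τ = 0 := by
        by_contra hh; exact hτ' ((kcol_ne_zero_iff σ' τ).mp hh)
      have := congrFun h τ
      simp only [Pi.neg_apply] at this
      rw [h2] at this
      apply h1; linarith
  refine ⟨?_, ?_, ?_⟩
  · -- extreme points
    apply Set.Subset.antisymm
    · rw [symPoly]
      exact extremePoints_convexHull_subset
    · intro v hv
      rw [hsym]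
      have hvS : v ∈ SS K j := by rw [hS] at hv; exact hv
      rw [mem_extremePoints]
      refine ⟨subset_convexHull ℝ _ (Finset.mem_coe.mpr hvS), ?_⟩
      rintro x₁ hx₁ x₂ hx₂ ⟨a, b, ha, hb, hab, hsum⟩
      have h1 := SS_max v hvS x₁ hx₁
      have h2 := SS_max v hvS x₂ hx₂
      have hL : a * (∑ τ, x₁ τ * v τ) + b * (∑ τ, x₂ τ * v τ) = ∑ τ, v τ * v τ := by
        have e : ∑ τ, (a • x₁ + b • x₂) τ * v τ
            = a * (∑ τ, x₁ τ * v τ) + b * (∑ τ, x₂ τ * v τ) := by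
          rw [Finset.mul_sum, Finset.mul_sum, ← Finset.sum_add_distrib]
          refine Finset.sum_congr rfl fun τ _ => ?_
          simp only [Pi.add_apply, Pi.smul_apply, smul_eq_mul]
          ring
        rw [hsum] at e
        exact e.symm
      have hsum_c : a * (∑ τ, v τ * v τ) + b * (∑ τ, v τ * v τ) = ∑ τ, v τ * v τ := by
        rw [← add_mul, hab, one_mul]
      have e1 : ∑ τ, x₁ τ * v τ = ∑ τ, v τ * v τ :=
        le_antisymm h1.1 (le_of_mul_le_mul_left
          (by linarith [mul_le_mul_of_nonneg_left h2.1 hb.le]) ha)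
      have e2 : ∑ τ, x₂ τ * v τ = ∑ τ, v τ * v τ :=
        le_antisymm h2.1 (le_of_mul_le_mul_left
          (by linarith [mul_le_mul_of_nonneg_left h1.1 ha.le]) hb)
      exact ⟨h1.2 e1, h2.2 e2⟩
  · -- cardinality
    rw [hS, Set.ncard_coe_finset]
    have hginj : Function.Injective
        (fun p : Bool × K.fdex (j+1) => if p.1 then kcol K j p.2 else -kcol K j p.2) := by
      rintro ⟨b, σ⟩ ⟨b', σ'⟩ h
      cases b <;> cases b' <;> simp only [if_true, if_false, Bool.false_eq_true] at h
      · have : σ = σ' := hinj (neg_injective h)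
        rw [this]
      · exact absurd h.symm (hne_col_neg σ' σ)
      · exact absurd h (hne_col_neg σ σ')
      · have : σ = σ' := hinj h
        rw [this]
    have hSSeq : SS K j = Finset.univ.image
        (fun p : Bool × K.fdex (j+1) => if p.1 then kcol K j p.2 else -kcol K j p.2) := by
      ext x
      simp only [Finset.mem_image, Finset.mem_univ, true_and]
      constructor
      · intro hx
        obtain ⟨σ, rfl | rfl⟩ := mem_SS x hx
        · exact ⟨(true, σ), rfl⟩
        · exact ⟨(false, σ), rfl⟩
      · rintro ⟨⟨b, σ⟩, rfl⟩
        cases b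
        · simpa using neg_kcol_mem_SS σ
        · simpa using kcol_mem_SS σ
    rw [hSSeq, Finset.card_image_of_injective _ hginj, Finset.card_univ, Fintype.card_prod,
      Fintype.card_bool]
  · -- lattice points
    apply Set.Subset.antisymm
    · rintro x ⟨hxh, hxint⟩
      rw [hsym] at hxh
      obtain ⟨μ, hμ0, hμ1, hμx⟩ := SS_rep x hxh
      by_cases hx0 : x = 0
      · exact Or.inr hx0
      · left
        have hxvals : ∀ τ, x τ = 0 ∨ x τ = 1 ∨ x τ = -1 := by
          intro τ
          obtain ⟨z, hz⟩ := hxint τ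
          have h1 : |x τ| ≤ 1 := by
            rw [hμx τ]
            calc |∑ y ∈ SS K j, μ y * y τ| ≤ ∑ y ∈ SS K j, |μ y * y τ| :=
                  Finset.abs_sum_le_sum_abs _ _
              _ ≤ ∑ y ∈ SS K j, μ y * 1 := Finset.sum_le_sum (fun y hy => by
                  rw [abs_mul, abs_of_nonneg (hμ0 y hy)]
                  exact mul_le_mul_of_nonneg_left (SS_abs_le y hy τ) (hμ0 y hy))
              _ = 1 := by rw [← Finset.sum_mul, hμ1, one_mul]
          rw [hz] at h1
          have h2 := abs_le.mp h1
          have h3 : z = -1 ∨ z = 0 ∨ z = 1 := by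
            have l1 : (-1:ℤ) ≤ z := by exact_mod_cast h2.1
            have l2 : z ≤ (1:ℤ) := by exact_mod_cast h2.2
            omega
          rcases h3 with h | h | h <;> rw [h] at hz <;> rw [hz] <;> norm_num
        have hsupp : ∃ v ∈ SS K j, 0 < μ v := by
          by_contra h
          push_neg at h
          have hz : ∑ y ∈ SS K j, μ y = 0 :=
            Finset.sum_eq_zero (fun y hy => le_antisymm (h y hy) (hμ0 y hy))
          rw [hμ1] at hz
          norm_num at hz
        obtain ⟨v₀, hv₀S, hv₀μ⟩ := hsupp
        obtain ⟨τ₀, hτ₀⟩ : ∃ τ₀, x τ₀ ≠ 0 := by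
          by_contra h
          push_neg at h
          exact hx0 (funext h)
        have hmatch : ∀ τ, x τ ≠ 0 → ∀ y ∈ SS K j, 0 < μ y → y τ = x τ := by
          intro τ hτ y hy hμy
          have hx2 : x τ * x τ = 1 := by
            rcases hxvals τ with h | h | h
            exacts [absurd h hτ, by rw [h]; norm_num, by rw [h]; norm_num]
          have hxabs : |x τ| = 1 := by
            rcases hxvals τ with h | h | h
            exacts [absurd h hτ, by rw [h]; norm_num, by rw [h]; norm_num]
          have key : ∀ w ∈ SS K j, w τ * x τ ≤ 1 := by
            intro w hw
            calc w τ * x τ ≤ |w τ * x τ| := le_abs_self _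
              _ = |w τ| * |x τ| := abs_mul _ _
              _ ≤ 1 * 1 := by
                  rw [hxabs]
                  exact mul_le_mul_of_nonneg_right (SS_abs_le w hw τ) (by norm_num)
              _ = 1 := one_mul 1
          have heq : ∑ w ∈ SS K j, μ w * (w τ * x τ) = ∑ w ∈ SS K j, μ w * 1 := by
            have e1 : ∑ w ∈ SS K j, μ w * (w τ * x τ)
                = (∑ w ∈ SS K j, μ w * w τ) * x τ := by
              rw [Finset.sum_mul]
              exact Finset.sum_congr rfl fun w _ => (mul_assoc _ _ _).symm
            rw [e1, ← hμx τ, hx2]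
            simp only [mul_one]
            exact hμ1.symm
          have h3 := Stmt7Aux.sum_eq_support hμ0 key heq y hy hμy
          have h4 : y τ * x τ = x τ * x τ := by rw [h3, hx2]
          exact mul_right_cancel₀ hτ h4
        by_cases hsingle : ∀ ρ, ρ ≠ τ₀ → x ρ = 0
        · exfalso
          obtain ⟨σ, hv₀c⟩ := mem_SS v₀ hv₀S
          have hv₀τ₀ : v₀ τ₀ = x τ₀ := hmatch τ₀ hτ₀ v₀ hv₀S hv₀μ
          have hv₀τ₀ne : v₀ τ₀ ≠ 0 := by rw [hv₀τ₀]; exact hτ₀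
          obtain ⟨τ₁, τ₂, h12, hs1, hs2⟩ := Stmt7Aux.exists_pair_ridges σ
          have hv1 : v₀ τ₁ ≠ 0 := by
            rcases hv₀c with rfl | rfl
            · exact (kcol_ne_zero_iff σ τ₁).mpr hs1
            · simpa using (kcol_ne_zero_iff σ τ₁).mpr hs1
          have hv2 : v₀ τ₂ ≠ 0 := by
            rcases hv₀c with rfl | rfl
            · exact (kcol_ne_zero_iff σ τ₂).mpr hs2
            · simpa using (kcol_ne_zero_iff σ τ₂).mpr hs2
          obtain ⟨ρ, hρτ₀, hv₀ρ⟩ : ∃ ρ : K.fdex j, ρ ≠ τ₀ ∧ v₀ ρ ≠ 0 := by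
            by_cases h : τ₁ = τ₀
            · exact ⟨τ₂, fun hh => h12 (by rw [h, hh]), hv2⟩
            · exact ⟨τ₁, h, hv1⟩
          have hxρ : x ρ = 0 := hsingle ρ hρτ₀
          have hsum0 : ∑ w ∈ SS K j, μ w * (w ρ * v₀ ρ) = 0 := by
            have e1 : ∑ w ∈ SS K j, μ w * (w ρ * v₀ ρ)
                = (∑ w ∈ SS K j, μ w * w ρ) * v₀ ρ := by
              rw [Finset.sum_mul]
              exact Finset.sum_congr rfl fun w _ => (mul_assoc _ _ _).symm
            rw [e1, ← hμx ρ, hxρ, zero_mul]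
          have hexw : ∃ w ∈ SS K j, μ w * (w ρ * v₀ ρ) < 0 := by
            by_contra h
            push_neg at h
            have hpos : 0 < μ v₀ * (v₀ ρ * v₀ ρ) := mul_pos hv₀μ (mul_self_pos.mpr hv₀ρ)
            have hle := Finset.single_le_sum (f := fun w => μ w * (w ρ * v₀ ρ)) h hv₀S
            rw [hsum0] at hle
            linarith
          obtain ⟨w, hwS, hwneg⟩ := hexw
          have hμw : 0 < μ w := by
            rcases eq_or_lt_of_le (hμ0 w hwS) with h | h
            · rw [← h, zero_mul] at hwneg; linarith
            · exact h
          have hwρv : w ρ * v₀ ρ < 0 := by nlinarith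
          have hwρ : w ρ ≠ 0 := by
            intro h; rw [h, zero_mul] at hwρv; linarith
          have hwτ₀ : w τ₀ = x τ₀ := hmatch τ₀ hτ₀ w hwS hμw
          have hwτ₀ne : w τ₀ ≠ 0 := by rw [hwτ₀]; exact hτ₀
          rcases SS_rigid w hwS v₀ hv₀S τ₀ ρ (fun h => hρτ₀ h.symm) hwτ₀ne hv₀τ₀ne hwρ hv₀ρ
            with h | h
          · rw [h] at hwρv
            nlinarith [mul_self_nonneg (v₀ ρ)]
          · have hc := congrFun h τ₀
            simp only [Pi.neg_apply] at hc
            rw [hwτ₀, hv₀τ₀] at hc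
            exact hτ₀ (by linarith)
        · push_neg at hsingle
          obtain ⟨ρ, hρτ₀, hxρ⟩ := hsingle
          have hall : ∀ y ∈ SS K j, 0 < μ y → y = v₀ := by
            intro y hyS hμy
            have h1 := hmatch τ₀ hτ₀ y hyS hμy
            have h2 := hmatch ρ hxρ y hyS hμy
            have g1 := hmatch τ₀ hτ₀ v₀ hv₀S hv₀μ
            have g2 := hmatch ρ hxρ v₀ hv₀S hv₀μ
            have hy1 : y τ₀ ≠ 0 := by rw [h1]; exact hτ₀
            have hy2 : y ρ ≠ 0 := by rw [h2]; exact hxρ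
            have hw1 : v₀ τ₀ ≠ 0 := by rw [g1]; exact hτ₀
            have hw2 : v₀ ρ ≠ 0 := by rw [g2]; exact hxρ
            rcases SS_rigid y hyS v₀ hv₀S τ₀ ρ (fun h => hρτ₀ h.symm) hy1 hw1 hy2 hw2
              with h | h
            · exact h
            · exfalso
              have hc := congrFun h τ₀
              simp only [Pi.neg_apply] at hc
              rw [h1, g1] at hc
              exact hτ₀ (by linarith)
          have hxv₀ : x = v₀ := by
            funext τ
            rw [hμx τ]
            have hcong : ∀ y ∈ SS K j, μ y * y τ = μ y * v₀ τ := by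
              intro y hy
              rcases eq_or_lt_of_le (hμ0 y hy) with h | h
              · rw [← h, zero_mul, zero_mul]
              · rw [hall y hy h]
            rw [Finset.sum_congr rfl hcong, ← Finset.sum_mul, hμ1, one_mul]
          rw [hS, hxv₀]
          exact Finset.mem_coe.mpr hv₀S
    · intro x hx
      rcases hx with hx | hx
      · refine ⟨?_, ?_⟩
        · exact subset_convexHull ℝ _ hx
        · obtain ⟨σc, hc | hc⟩ := hx
          · intro τ; exact ⟨K.B j τ σc, congrFun hc τ⟩
          · intro τ
            refine ⟨-(K.B j τ σc), ?_⟩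
            rw [congrFun hc τ]
            push_cast
            ring
      · rw [Set.mem_singleton_iff] at hx
        subst hx
        refine ⟨?_, fun τ => ⟨0, by norm_num⟩⟩
        have h1 : kcol K j σ₀ ∈ colsPM (K.B j) := ⟨σ₀, Or.inl rfl⟩
        have h2 : -kcol K j σ₀ ∈ colsPM (K.B j) :=
          ⟨σ₀, Or.inr (funext fun τ => by simp [kcol])⟩
        have hcv := convex_convexHull ℝ (colsPM (K.B j))
        have hm := hcv (subset_convexHull ℝ _ h1) (subset_convexHull ℝ _ h2)
          (by norm_num : (0:ℝ) ≤ 1/2) (by norm_num : (0:ℝ) ≤ 1/2) (by norm_num : (1/2:ℝ)+1/2 = 1)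
        have hzero : (1/2 : ℝ) • kcol K j σ₀ + (1/2 : ℝ) • (-kcol K j σ₀)
            = (0 : K.fdex j → ℝ) := by
          funext τ
          simp only [Pi.add_apply, Pi.smul_apply, Pi.neg_apply, Pi.zero_apply, smul_eq_mul]
          ring
        show (0 : K.fdex j → ℝ) ∈ convexHull ℝ (colsPM (K.B j))
        rw [← hzero]
        exact hm
end

section
/- Let Δ be a connected closed orientable d-dimensional pseudomanifold with s facets. Then the number of facets of the symmetric homology polytope P_Δ equals C(2m, m) if s = 2m is even, and equals (2m+1)·C(2m, m) if s = 2m+1 is odd. -/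
open Matrix BigOperators Pointwise

/-!
Orient the facets by the fundamental cycle: in a closed strongly connected pseudomanifold each
ridge row of `∂_d` has exactly two entries `±1`, so every real cycle has constant absolute value.
Hence the twisted columns `w_σ = ε_σ ∂σ` sum to zero and satisfy no other linear relation, and
`P_Δ = conv (±w_σ)`. The facets of such a polytope are exactly the faces `{c = 1}`, where
`c (w_σ) = a_σ` for a balanced sign vector `a ∈ {0, ±1}^s` (entries summing to zero, at most one
zero): the supporting functional of a facet, scaled to maximum `1`, can be rounded to a balanced
sign vector whose face contains the facet, and `a` is recovered from its face. A balanced sign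
vector has `s % 2` zeros and `s / 2` plus signs, which gives the count.
-/

open Finset

section SymmetricHull

variable {E F : Type*} [AddCommGroup E] [Module ℝ E] [AddCommGroup F] [Module ℝ F]

theorem mem_convexHull_setOf_apply_eq {S : Set E} {l : E →ₗ[ℝ] ℝ} {M : ℝ}
    (hle : ∀ y ∈ S, l y ≤ M) {x : E} (hx : x ∈ convexHull ℝ S) (hlx : l x = M) :
    x ∈ convexHull ℝ {y ∈ S | l y = M} := by
  obtain ⟨ι, _, μ, z, hμ0, hμ1, hzS, rfl⟩ := mem_convexHull_iff_exists_fintype.1 hx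
  have hterm : ∀ i ∈ univ, μ i * (M - l (z i)) = 0 := by
    refine (sum_eq_zero_iff_of_nonneg fun i _ => mul_nonneg (hμ0 i) ?_).1 ?_
    · exact sub_nonneg.2 (hle _ (hzS i))
    · simp only [map_sum, map_smul, smul_eq_mul] at hlx
      simp only [mul_sub, sum_sub_distrib, ← sum_mul, hμ1, one_mul, hlx, sub_self]
  rw [← centerMass_eq_of_sum_1 _ _ hμ1, ← centerMass_filter_ne_zero]
  refine centerMass_mem_convexHull _ (fun i _ => hμ0 i) ?_ fun i hi => ⟨hzS i, ?_⟩
  · rw [sum_filter_ne_zero, hμ1]; exact one_pos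
  · have := hterm i (mem_univ i)
    have hi := (mem_filter.1 hi).2
    exact (sub_eq_zero.1 ((mul_eq_zero.1 this).resolve_left hi)).symm

theorem sep_forall_le_eq_sep_eq {α β : Type*} [PartialOrder β] (f : α → β) {A : Set α} {p : α}
    (hp : p ∈ A) (hle : ∀ y ∈ A, f y ≤ f p) :
    {x ∈ A | ∀ y ∈ A, f y ≤ f x} = {x ∈ A | f x = f p} := by
  ext x
  constructor
  · rintro ⟨hx, hmax⟩
    exact ⟨hx, le_antisymm (hle x hx) (hmax p hp)⟩
  · rintro ⟨hx, hfx⟩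
    exact ⟨hx, fun y hy => hfx ▸ hle y hy⟩

variable {κ : Type*}

def symHull (w : κ → E) : Set E := convexHull ℝ {x | ∃ i, x = w i ∨ x = -w i}

theorem mem_symHull (w : κ → E) (i : κ) : w i ∈ symHull w :=
  subset_convexHull ℝ _ ⟨i, Or.inl rfl⟩

theorem neg_mem_symHull {w : κ → E} {x : E} (hx : x ∈ symHull w) : -x ∈ symHull w := by
  have hS : -{x | ∃ i, x = w i ∨ x = -w i} = {x | ∃ i, x = w i ∨ x = -w i} := by
    ext x; simp [neg_eq_iff_eq_neg, or_comm]
  rw [symHull, ← Set.neg_mem_neg, ← convexHull_neg, hS, neg_neg]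
  exact hx

theorem symHull_smul_sign (w : κ → E) {ε : κ → ℝ} (hε : ∀ i, |ε i| = 1) :
    symHull (fun i => ε i • w i) = symHull w := by
  unfold symHull
  congr 1
  ext x
  refine exists_congr fun i => ?_
  rcases (abs_eq zero_le_one).1 (hε i) with h | h <;> simp [h, or_comm]

theorem le_of_mem_symHull {w : κ → E} {l : E →ₗ[ℝ] ℝ} {M : ℝ} (h : ∀ i, |l (w i)| ≤ M) :
    ∀ x ∈ symHull w, l x ≤ M := by
  refine fun x hx => convexHull_min ?_ (convex_halfSpace_le l.isLinear M) hx
  rintro _ ⟨i, rfl | rfl⟩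
  · exact (le_abs_self _).trans (h i)
  · simpa using (neg_le_abs _).trans (h i)

theorem eqOn_symHull {w : κ → E} {f g : E →ₗ[ℝ] F} (h : ∀ i, f (w i) = g (w i)) :
    Set.EqOn f g (symHull w) := by
  refine fun x hx => convexHull_min ?_ (LinearMap.eqLocus f g).convex hx
  rintro _ ⟨i, rfl | rfl⟩ <;> simp [LinearMap.mem_eqLocus, h i]

end SymmetricHull

theorem exists_strongDual_apply_eq {ι κ : Type*} [Fintype ι] [Fintype κ] {w : κ → ι → ℝ}
    (hrel : ∀ t : κ → ℝ, ∑ i, t i • w i = 0 → ∃ r, ∀ i, t i = r)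
    {a : κ → ℝ} (ha : ∑ i, a i = 0) : ∃ c : StrongDual ℝ (ι → ℝ), ∀ i, c (w i) = a i := by
  classical
  have hmem : Fintype.linearCombination ℝ a ∈
      LinearMap.range (Fintype.linearCombination ℝ w).dualMap := by
    rw [LinearMap.range_dualMap_eq_dualAnnihilator_ker, Submodule.mem_dualAnnihilator]
    intro t ht
    obtain ⟨r, hr⟩ := hrel t (by simpa [Fintype.linearCombination_apply] using ht)
    simp [Fintype.linearCombination_apply, hr, ← mul_sum, ha]
  obtain ⟨c, hc⟩ := hmem
  refine ⟨LinearMap.toContinuousLinearMap c, fun i => ?_⟩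
  simpa [Fintype.linearCombination_apply_single] using
    LinearMap.congr_fun hc (Pi.single i 1)

section Signing

variable {κ : Type*} [DecidableEq κ]

def signing (Z P : Finset κ) (i : κ) : ℝ := if i ∈ Z then 0 else if i ∈ P then 1 else -1

theorem eq_of_signing_eq {Z P Z' P' : Finset κ} (h : Disjoint Z P) (h' : Disjoint Z' P')
    (heq : signing Z P = signing Z' P') : Z = Z' ∧ P = P' := by
  have hZ : ∀ {Z P : Finset κ}, Disjoint Z P → ∀ i, (i ∈ Z ↔ signing Z P i = 0) := by
    intro Z P _ i; unfold signing; split_ifs <;> simp_all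
  have hP : ∀ {Z P : Finset κ}, Disjoint Z P → ∀ i, (i ∈ P ↔ signing Z P i = 1) := by
    intro Z P hd i; unfold signing
    by_cases hZ : i ∈ Z
    · simp [hZ, disjoint_left.1 hd hZ]
    · by_cases hP : i ∈ P <;> norm_num [hZ, hP]
  exact ⟨ext fun i => by rw [hZ h, hZ h', heq], ext fun i => by rw [hP h, hP h', heq]⟩

end Signing

section BalancedSign

variable {κ : Type*} [Fintype κ]

def IsBalancedSign (a : κ → ℝ) : Prop :=
  (∀ i, a i = 1 ∨ a i = -1 ∨ a i = 0) ∧ ∑ i, a i = 0 ∧ {i | a i = 0}.Subsingleton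

variable [DecidableEq κ]

theorem sum_signing {Z P : Finset κ} (h : Disjoint Z P) :
    ∑ i, signing Z P i = #P - #(Z ∪ P)ᶜ := by
  have hterm : ∀ i, signing Z P i =
      (if i ∈ P then 1 else 0) - (if i ∈ (Z ∪ P)ᶜ then 1 else 0) := fun i => by
    unfold signing
    by_cases hZ : i ∈ Z
    · simp [hZ, disjoint_left.1 h hZ]
    · by_cases hP : i ∈ P <;> simp [hZ, hP]
  simp only [hterm, sum_sub_distrib, sum_boole, filter_mem_eq_inter, univ_inter]

theorem isBalancedSign_signing {Z P : Finset κ} (h : Disjoint Z P)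
    (hZ : #Z = Fintype.card κ % 2) (hP : #P = Fintype.card κ / 2) :
    IsBalancedSign (signing Z P) := by
  refine ⟨fun i => ?_, ?_, fun i hi k hk => ?_⟩
  · unfold signing; split_ifs <;> simp
  · have hcard := card_add_card_compl (Z ∪ P)
    rw [card_union_of_disjoint h] at hcard
    have : #(Z ∪ P)ᶜ = #P := by omega
    rw [sum_signing h, this, sub_self]
  · have hmem : ∀ {i}, signing Z P i = 0 → i ∈ Z := fun {i} hi => by
      unfold signing at hi; split_ifs at hi with h1 <;> first | exact h1 | norm_num at hi
    exact card_le_one.1 (by omega) _ (hmem hi) _ (hmem hk)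

theorem IsBalancedSign.exists_eq_signing {a : κ → ℝ} (ha : IsBalancedSign a) :
    ∃ Z P : Finset κ, Disjoint Z P ∧ #Z = Fintype.card κ % 2 ∧ #P = Fintype.card κ / 2 ∧
      a = signing Z P := by
  classical
  obtain ⟨hval, hsum, hzero⟩ := ha
  set Z := univ.filter fun i => a i = 0
  set P := univ.filter fun i => a i = 1
  have hZP : Disjoint Z P := disjoint_filter.2 fun i _ h0 h1 => by simp [h0] at h1
  have ha : a = signing Z P := by
    funext i
    unfold signing
    rcases hval i with h | h | h <;> simp [Z, P, h]
  have hZ : #Z ≤ 1 := card_le_one.2 fun i hi k hk => hzero (mem_filter.1 hi).2 (mem_filter.1 hk).2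
  have hcard := card_add_card_compl (Z ∪ P)
  rw [card_union_of_disjoint hZP] at hcard
  have hPN : (#P : ℝ) = #(Z ∪ P)ᶜ := by
    rw [ha, sum_signing hZP] at hsum; linarith
  norm_cast at hPN
  exact ⟨Z, P, hZP, by omega, by omega, ha⟩

end BalancedSign

theorem ncard_setOf_isBalancedSign (κ : Type*) [Fintype κ] :
    {a : κ → ℝ | IsBalancedSign a}.ncard =
      if Fintype.card κ % 2 = 0 then (Fintype.card κ).choose (Fintype.card κ / 2)
      else Fintype.card κ * (Fintype.card κ - 1).choose ((Fintype.card κ - 1) / 2) := by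
  classical
  set s := Fintype.card κ
  set T : Finset (Σ _ : Finset κ, Finset κ) :=
    (powersetCard (s % 2) univ).sigma fun Z => powersetCard (s / 2) Zᶜ
  have hT : ∀ x, x ∈ T ↔ Disjoint x.1 x.2 ∧ #x.1 = s % 2 ∧ #x.2 = s / 2 := by
    rintro ⟨Z, P⟩
    simp only [T, mem_sigma, mem_powersetCard, subset_univ, true_and,
      subset_compl_iff_disjoint_left]
    tauto
  set f : (Σ _ : Finset κ, Finset κ) → κ → ℝ := fun x => signing x.1 x.2
  have hset : {a : κ → ℝ | IsBalancedSign a} = f '' T := by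
    ext a
    constructor
    · intro ha
      obtain ⟨Z, P, hZP, hZ, hP, rfl⟩ := IsBalancedSign.exists_eq_signing ha
      exact ⟨⟨Z, P⟩, (hT _).2 ⟨hZP, hZ, hP⟩, rfl⟩
    · rintro ⟨x, hx, rfl⟩
      obtain ⟨hZP, hZ, hP⟩ := (hT x).1 hx
      exact isBalancedSign_signing hZP hZ hP
  have hinj : Set.InjOn f T := by
    rintro ⟨Z, P⟩ hx ⟨Z', P'⟩ hx' heq
    obtain ⟨rfl, rfl⟩ := eq_of_signing_eq ((hT _).1 hx).1 ((hT _).1 hx').1 heq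
    rfl
  have hcard : #T = s.choose (s % 2) * (s - s % 2).choose (s / 2) := by
    rw [card_sigma, sum_congr rfl fun Z hZ => by
      rw [card_powersetCard, card_compl, (mem_powersetCard.1 hZ).2], sum_const,
      card_powersetCard, card_univ, smul_eq_mul]
  rw [hset, hinj.ncard_image, Set.ncard_coe_finset, hcard]
  split_ifs with hs
  · simp [hs]
  · rw [Nat.mod_two_ne_zero.1 hs, Nat.choose_one_right, show (s - 1) / 2 = s / 2 by omega]

section SignExtension

variable {κ : Type*} [Fintype κ]

theorem exists_isBalancedSign_of_card_le [DecidableEq κ] {A B : Finset κ} (hAB : Disjoint A B)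
    (hA : #A ≤ #B + #(A ∪ B)ᶜ) (hB : #B ≤ #A + #(A ∪ B)ᶜ) :
    ∃ a, IsBalancedSign a ∧ (∀ i ∈ A, a i = 1) ∧ ∀ i ∈ B, a i = -1 := by
  set C := (A ∪ B)ᶜ
  have hs : #A + #B + #C = Fintype.card κ := by
    rw [← card_union_of_disjoint hAB, card_add_card_compl]
  obtain ⟨P', hP'C, hP'⟩ := exists_subset_card_eq (s := C) (n := Fintype.card κ / 2 - #A)
    (by omega)
  obtain ⟨Z, hZ, hZcard⟩ := exists_subset_card_eq (s := C \ P') (n := Fintype.card κ % 2)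
    (by rw [card_sdiff_of_subset hP'C]; omega)
  have hAC : Disjoint A C := disjoint_compl_right.mono_right (by simp [C])
  have hBC : Disjoint B C := disjoint_compl_right.mono_right (by simp [C])
  have hZC : Z ⊆ C := hZ.trans sdiff_subset
  have hZP : Disjoint Z (A ∪ P') := disjoint_union_right.2
    ⟨(hAC.mono_right hZC).symm, sdiff_disjoint.mono_left hZ⟩
  refine ⟨signing Z (A ∪ P'), isBalancedSign_signing hZP hZcard ?_, fun i hi => ?_,
    fun i hi => ?_⟩
  · rw [card_union_of_disjoint (hAC.mono_right hP'C)]; omega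
  · have hiZ : i ∉ Z := fun h => disjoint_left.1 hAC hi (hZC h)
    simp [signing, hiZ, hi]
  · have hiC : i ∉ C := disjoint_left.1 hBC hi
    have hiZ : i ∉ Z := fun h => hiC (hZC h)
    have hiP' : i ∉ P' := fun h => hiC (hP'C h)
    simp [signing, hiZ, disjoint_left.1 hAB.symm hi, hiP']

theorem exists_isBalancedSign_of_abs_le {v : κ → ℝ} {M : ℝ} (hM : 0 < M)
    (hv : ∀ i, |v i| ≤ M) (hsum : ∑ i, v i = 0) :
    ∃ a, IsBalancedSign a ∧ ∀ i, (v i = M → a i = 1) ∧ (v i = -M → a i = -1) := by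
  classical
  set A := univ.filter fun i => v i = M
  set B := univ.filter fun i => v i = -M
  have hAB : Disjoint A B := disjoint_filter.2 fun i _ h h' => by linarith
  have hsumA : ∑ i ∈ A, v i = #A * M := by
    rw [sum_congr rfl fun i hi => (mem_filter.1 hi).2, sum_const, nsmul_eq_mul]
  have hsumB : ∑ i ∈ B, v i = -(#B * M) := by
    rw [sum_congr rfl fun i hi => (mem_filter.1 hi).2, sum_const, nsmul_eq_mul, mul_neg]
  have hsumC : ∑ i ∈ (A ∪ B)ᶜ, v i = (#B - #A) * M := by
    rw [← sum_add_sum_compl (A ∪ B), sum_union hAB, hsumA, hsumB] at hsum; linarith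
  have hC : |∑ i ∈ (A ∪ B)ᶜ, v i| ≤ #(A ∪ B)ᶜ * M :=
    (abs_sum_le_sum_abs _ _).trans (by simpa using sum_le_card_nsmul _ _ _ fun i _ => hv i)
  rw [hsumC, abs_le] at hC
  have hA : (#A : ℝ) ≤ #B + #(A ∪ B)ᶜ := (mul_le_mul_iff_left₀ hM).1 (by linarith [hC.1])
  have hB : (#B : ℝ) ≤ #A + #(A ∪ B)ᶜ := (mul_le_mul_iff_left₀ hM).1 (by linarith [hC.2])
  obtain ⟨a, ha, hA, hB⟩ := exists_isBalancedSign_of_card_le hAB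
    (by exact_mod_cast hA) (by exact_mod_cast hB)
  exact ⟨a, ha, fun i => ⟨fun h => hA i (by simp [A, h]), fun h => hB i (by simp [B, h])⟩⟩

end SignExtension

section Facets

variable {κ : Type*} [Fintype κ] {a : κ → ℝ}

theorem IsBalancedSign.exists_ne_zero (ha : IsBalancedSign a) (hκ : 2 ≤ Fintype.card κ) :
    ∃ i, a i ≠ 0 := by
  obtain ⟨i, k, hik⟩ := Fintype.exists_pair_of_one_lt_card hκ
  by_contra! h
  exact hik (ha.2.2 (h i) (h k))

theorem IsBalancedSign.mul_self_eq_one (ha : IsBalancedSign a) {i : κ} (hi : a i ≠ 0) :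
    a i * a i = 1 := by
  rcases ha.1 i with h | h | h <;> simp_all

theorem IsBalancedSign.apply_eq_mul {E : Type*} [AddCommGroup E] [Module ℝ E] {w : κ → E}
    (hsum : ∑ i, w i = 0) (ha : IsBalancedSign a) {l : E →ₗ[ℝ] ℝ} {M : ℝ}
    (h : ∀ i, a i ≠ 0 → l (a i • w i) = M) (i : κ) : l (w i) = M * a i := by
  have hne : ∀ i, a i ≠ 0 → l (w i) = M * a i := fun i hi => by
    rw [← h i hi, map_smul, smul_eq_mul, mul_right_comm, ha.mul_self_eq_one hi, one_mul]
  by_cases hi : a i = 0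
  · have hsum' : ∑ k, (l (w k) - M * a k) = 0 := by
      rw [sum_sub_distrib, ← map_sum, hsum, ← mul_sum, ha.2.1]; simp
    rwa [sum_eq_single i (fun k _ hk => sub_eq_zero.2 (hne k fun h0 => hk (ha.2.2 h0 hi)))
      (by simp), sub_eq_zero] at hsum'
  · exact hne i hi

variable {ι : Type*} {w : κ → ι → ℝ} {c : StrongDual ℝ (ι → ℝ)}

theorem IsBalancedSign.smul_mem_face (ha : IsBalancedSign a) (hc : ∀ i, c (w i) = a i)
    {i : κ} (hi : a i ≠ 0) : a i • w i ∈ {x ∈ symHull w | c x = 1} := by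
  rcases ha.1 i with h | h | h
  · simp [h, mem_symHull, hc]
  · simp [h, neg_mem_symHull (mem_symHull w i), hc]
  · exact absurd h hi

theorem IsBalancedSign.face_mem_polyFacets (hsum : ∑ i, w i = 0) (ha : IsBalancedSign a)
    (hκ : 2 ≤ Fintype.card κ) (hc : ∀ i, c (w i) = a i) :
    {x ∈ symHull w | c x = 1} ∈ polyFacets (symHull w) := by
  have hle : ∀ x ∈ symHull w, c x ≤ 1 := le_of_mem_symHull (l := (c : (ι → ℝ) →ₗ[ℝ] ℝ))
    fun i => by rw [ContinuousLinearMap.coe_coe, hc]; rcases ha.1 i with h | h | h <;> simp [h]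
  obtain ⟨i₀, hi₀⟩ := ha.exists_ne_zero hκ
  obtain ⟨hpP, hcp⟩ := ha.smul_mem_face hc hi₀
  set p := a i₀ • w i₀
  refine ⟨fun _ => ⟨c, by rw [sep_forall_le_eq_sep_eq c hpP (hcp ▸ hle), hcp]⟩, ?_,
    fun G hG hFG hGP => ?_⟩
  · refine Set.ssubset_iff_subset_ne.2 ⟨Set.sep_subset _ _, fun h => ?_⟩
    have : c (-p) = 1 := (h.symm ▸ neg_mem_symHull hpP : -p ∈ {x ∈ symHull w | c x = 1}).2
    rw [map_neg, hcp] at this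
    norm_num at this
  obtain ⟨l, rfl⟩ := hG ⟨p, hFG ⟨hpP, hcp⟩⟩
  have hmax : ∀ y ∈ symHull w, l y ≤ l p := (hFG ⟨hpP, hcp⟩).2
  rw [sep_forall_le_eq_sep_eq l hpP hmax] at hFG hGP ⊢
  -- `l` is constant on the face of `a`, hence a multiple of `c` on `symHull w`
  have hlw : ∀ i, l (w i) = l p * a i := ha.apply_eq_mul (l := (l : (ι → ℝ) →ₗ[ℝ] ℝ)) hsum
    fun i hi => (hFG (ha.smul_mem_face hc hi)).2
  have hlc : Set.EqOn l (l p • c) (symHull w) := eqOn_symHull (f := (l : (ι → ℝ) →ₗ[ℝ] ℝ))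
    (g := l p • (c : (ι → ℝ) →ₗ[ℝ] ℝ)) fun i => by simp [hlw, hc]
  have hlp : l p ≠ 0 := fun h0 => hGP.ne (Set.ext fun x => ⟨fun hx => hx.1, fun hx =>
    ⟨hx, by simpa [h0] using hlc hx⟩⟩)
  ext x
  refine and_congr_right fun hx => ?_
  rw [hlc hx]
  simp [hlp]

theorem IsBalancedSign.eq_of_face_eq {b : κ → ℝ} (ha : IsBalancedSign a) (hb : IsBalancedSign b)
    {c c' : StrongDual ℝ (ι → ℝ)} (hc : ∀ i, c (w i) = a i) (hc' : ∀ i, c' (w i) = b i)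
    (heq : {x ∈ symHull w | c x = 1} = {x ∈ symHull w | c' x = 1}) : a = b := by
  funext i
  have h₁ := Set.ext_iff.1 heq (w i)
  have h₂ := Set.ext_iff.1 heq (-w i)
  simp only [Set.mem_ofPred_eq, mem_symHull, neg_mem_symHull (mem_symHull w i), true_and,
    map_neg, hc, hc'] at h₁ h₂
  rcases ha.1 i with h | h | h <;> rcases hb.1 i with h' | h' | h' <;>
    simp_all

variable [Fintype ι]

theorem exists_isBalancedSign_of_mem_polyFacets (hsum : ∑ i, w i = 0)
    (hrel : ∀ t : κ → ℝ, ∑ i, t i • w i = 0 → ∃ r, ∀ i, t i = r)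
    (hκ : 2 ≤ Fintype.card κ) {G : Set (ι → ℝ)} (hG : G ∈ polyFacets (symHull w)) :
    ∃ a, IsBalancedSign a ∧
      ∀ c : StrongDual ℝ (ι → ℝ), (∀ i, c (w i) = a i) → G = {x ∈ symHull w | c x = 1} := by
  obtain ⟨hGexp, hGP, hGmax⟩ := hG
  -- `∅` lies in the face of any balanced sign vector, which is proper and nonempty
  have hGne : G.Nonempty := by
    obtain ⟨a₀, ha₀, -⟩ := exists_isBalancedSign_of_abs_le (v := fun _ : κ => (0 : ℝ)) one_pos
      (by simp) (by simp)
    obtain ⟨c₀, hc₀⟩ := exists_strongDual_apply_eq hrel ha₀.2.1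
    obtain ⟨i, hi⟩ := ha₀.exists_ne_zero hκ
    have hF := ha₀.face_mem_polyFacets hsum hκ hc₀
    rw [Set.nonempty_iff_ne_empty]
    rintro rfl
    exact Set.notMem_empty _ (hGmax _ hF.1 (Set.empty_subset _) hF.2.1 ▸ ha₀.smul_mem_face hc₀ hi)
  obtain ⟨l, rfl⟩ := hGexp hGne
  obtain ⟨x₀, hx₀, hmax⟩ := hGne
  rw [sep_forall_le_eq_sep_eq l hx₀ hmax] at hGP hGmax ⊢
  set M := l x₀
  have hv : ∀ i, |l (w i)| ≤ M := fun i => by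
    have := hmax _ (neg_mem_symHull (mem_symHull w i))
    rw [map_neg] at this
    exact abs_le.2 ⟨by linarith, hmax _ (mem_symHull w i)⟩
  have hM : 0 < M := by
    by_contra! hM
    have h0 : Set.EqOn l 0 (symHull w) := eqOn_symHull (f := (l : (ι → ℝ) →ₗ[ℝ] ℝ)) (g := 0)
      fun i => by simpa using abs_nonpos_iff.1 ((hv i).trans hM)
    exact hGP.ne (Set.ext fun x => ⟨And.left, fun hx => ⟨hx, by simp [M, h0 hx, h0 hx₀]⟩⟩)
  -- round `l ∘ w / M` to a balanced sign vector keeping its entries `±1`; its face contains `G`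
  obtain ⟨a, ha, hav⟩ := exists_isBalancedSign_of_abs_le hM hv (by rw [← map_sum, hsum, map_zero])
  refine ⟨a, ha, fun c hc => ?_⟩
  have hF := ha.face_mem_polyFacets hsum hκ hc
  refine (hGmax _ hF.1 (fun x hx => ⟨hx.1, ?_⟩) hF.2.1).symm
  have hgen : {y ∈ {x | ∃ i, x = w i ∨ x = -w i} | l y = M} ⊆ {x | c x = 1} := by
    rintro _ ⟨⟨i, rfl | rfl⟩, h⟩
    · simp [hc, (hav i).1 h]
    · rw [map_neg] at h
      simp [hc, (hav i).2 (by linarith)]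
  exact convexHull_min hgen (convex_hyperplane c.toLinearMap.isLinear 1)
    (mem_convexHull_setOf_apply_eq (l := (l : (ι → ℝ) →ₗ[ℝ] ℝ))
      (fun y hy => hmax y (subset_convexHull ℝ _ hy)) hx.1 hx.2)

theorem ncard_polyFacets_symHull (hsum : ∑ i, w i = 0)
    (hrel : ∀ t : κ → ℝ, ∑ i, t i • w i = 0 → ∃ r, ∀ i, t i = r) (hκ : 2 ≤ Fintype.card κ) :
    (polyFacets (symHull w)).ncard = {a : κ → ℝ | IsBalancedSign a}.ncard := by
  choose! c hc using fun a (ha : IsBalancedSign a) => exists_strongDual_apply_eq hrel ha.2.1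
  have hfacets : polyFacets (symHull w) =
      (fun a => {x ∈ symHull w | c a x = 1}) '' {a | IsBalancedSign a} := by
    ext G
    constructor
    · intro hG
      obtain ⟨a, ha, hGa⟩ := exists_isBalancedSign_of_mem_polyFacets hsum hrel hκ hG
      exact ⟨a, ha, (hGa _ (hc a ha)).symm⟩
    · rintro ⟨a, ha, rfl⟩
      exact ha.face_mem_polyFacets hsum hκ (hc a ha)
  rw [hfacets, Set.InjOn.ncard_image fun a ha b hb h => ha.eq_of_face_eq hb (hc a ha) (hc b hb) h]

end Facets

theorem abs_bEntry_eq_one {n : ℕ} {τ σ : Finset (Fin n)} (h : τ ⊆ σ) (hcard : #σ = #τ + 1) :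
    |bEntry τ σ| = 1 := by
  obtain ⟨v, hv⟩ := card_eq_one.1 (by rw [card_sdiff_of_subset h]; omega : #(σ \ τ) = 1)
  rw [bEntry, if_pos ⟨h, hcard⟩, hv, sum_singleton, abs_neg_one_pow]

theorem bEntry_eq_zero {n : ℕ} {τ σ : Finset (Fin n)} (h : ¬τ ⊆ σ) : bEntry τ σ = 0 :=
  if_neg fun h' => h h'.1

namespace SC

variable {n j : ℕ} (K : SC n)

theorem two_le_card_fdex (hdim : K.dimIs (j + 1)) (hclosed : ∀ τ : K.fdex j, K.ridgeDeg j τ = 2) :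
    2 ≤ Fintype.card (K.fdex (j + 1)) := by
  obtain ⟨σ, hσ, hcard⟩ := hdim.2
  obtain ⟨v, hv⟩ := K.face_nonempty σ hσ
  let τ : K.fdex j := ⟨σ.erase v,
    K.down_closed σ hσ _ (erase_subset _ _) (card_pos.1 (by rw [card_erase_of_mem hv]; omega)),
    by rw [card_erase_of_mem hv, hcard]; rfl⟩
  calc 2 = K.ridgeDeg j τ := (hclosed τ).symm
    _ ≤ Fintype.card (K.fdex (j + 1)) := card_filter_le _ _

theorem abs_eq_of_adjacent (hclosed : ∀ τ : K.fdex j, K.ridgeDeg j τ = 2)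
    {u : K.fdex (j + 1) → ℝ} (hu : (K.B j).map (Int.cast : ℤ → ℝ) *ᵥ u = 0)
    {σ σ' : K.fdex (j + 1)} (hadj : #(σ.1 ∩ σ'.1) = j + 1) : |u σ| = |u σ'| := by
  by_cases hne : σ = σ'
  · rw [hne]
  let τ : K.fdex j := ⟨σ.1 ∩ σ'.1,
    K.down_closed _ σ.2.1 _ inter_subset_left (card_pos.1 (by omega)), hadj⟩
  have hfacets : univ.filter (fun ρ : K.fdex (j + 1) => τ.1 ⊆ ρ.1) = {σ, σ'} := by
    refine (eq_of_subset_of_card_le (fun ρ hρ => ?_) ?_).symm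
    · rcases mem_insert.1 hρ with rfl | hρ
      · simp [τ, inter_subset_left]
      · simp [mem_singleton.1 hρ, τ, inter_subset_right]
    · rw [card_pair hne]; exact (hclosed τ).le
  have hrow := congrFun hu τ
  simp only [mulVec, dotProduct, map_apply, Pi.zero_apply] at hrow
  rw [← sum_filter_of_ne (p := fun ρ => τ.1 ⊆ ρ.1) fun ρ _ h => by_contra fun hρ => h (by
    simp [SC.B, bEntry_eq_zero hρ]), hfacets, sum_pair hne] at hrow
  have habs : ∀ ρ : K.fdex (j + 1), τ.1 ⊆ ρ.1 → |(K.B j τ ρ : ℝ)| = 1 := fun ρ hρ => by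
    exact_mod_cast abs_bEntry_eq_one hρ (by rw [ρ.2.2, τ.2.2])
  calc |u σ| = |(K.B j τ σ : ℝ) * u σ| := by rw [abs_mul, habs σ inter_subset_left, one_mul]
    _ = |(K.B j τ σ' : ℝ) * u σ'| := by rw [eq_neg_of_add_eq_zero_left hrow, abs_neg]
    _ = |u σ'| := by rw [abs_mul, habs σ' inter_subset_right, one_mul]

theorem abs_eq_of_stronglyConnected (hsc : K.StronglyConnected j)
    (hclosed : ∀ τ : K.fdex j, K.ridgeDeg j τ = 2)
    {u : K.fdex (j + 1) → ℝ} (hu : (K.B j).map (Int.cast : ℤ → ℝ) *ᵥ u = 0)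
    (σ σ' : K.fdex (j + 1)) : |u σ| = |u σ'| := by
  induction hsc σ σ' with
  | refl => rfl
  | tail _ hadj ih => exact ih.trans (K.abs_eq_of_adjacent hclosed hu hadj)

theorem exists_orientation (hsc : K.StronglyConnected j)
    (hclosed : ∀ τ : K.fdex j, K.ridgeDeg j τ = 2)
    {z : K.fdex (j + 1) → ℤ} (hz0 : z ≠ 0) (hz : K.B j *ᵥ z = 0) :
    ∃ ε : K.fdex (j + 1) → ℝ, (∀ ρ, |ε ρ| = 1) ∧ (K.B j).map (Int.cast : ℤ → ℝ) *ᵥ ε = 0 := by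
  obtain ⟨σ₀, hσ₀⟩ : ∃ σ, z σ ≠ 0 := by
    by_contra! h
    exact hz0 (funext h)
  set Z : K.fdex (j + 1) → ℝ := fun ρ => z ρ
  have hZ : (K.B j).map (Int.cast : ℤ → ℝ) *ᵥ Z = 0 := funext fun τ => by
    have h := (Int.castRingHom ℝ).map_mulVec (K.B j) z τ
    rw [hz, Pi.zero_apply, map_zero] at h
    exact h.symm
  have hZ₀ : 0 < |Z σ₀| := abs_pos.2 (Int.cast_ne_zero.2 hσ₀)
  refine ⟨|Z σ₀|⁻¹ • Z, fun ρ => ?_, by rw [mulVec_smul, hZ, smul_zero]⟩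
  rw [Pi.smul_apply, smul_eq_mul, abs_mul, abs_inv, abs_abs,
    K.abs_eq_of_stronglyConnected hsc hclosed hZ ρ σ₀, inv_mul_cancel₀ hZ₀.ne']

theorem eq_smul_of_mulVec_eq_zero (hsc : K.StronglyConnected j)
    (hclosed : ∀ τ : K.fdex j, K.ridgeDeg j τ = 2) {ε u : K.fdex (j + 1) → ℝ}
    (hε : ∀ ρ, |ε ρ| = 1) (hεker : (K.B j).map (Int.cast : ℤ → ℝ) *ᵥ ε = 0)
    (hu : (K.B j).map (Int.cast : ℤ → ℝ) *ᵥ u = 0) : ∃ r : ℝ, u = r • ε := by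
  rcases isEmpty_or_nonempty (K.fdex (j + 1)) with h | ⟨⟨σ₀⟩⟩
  · exact ⟨0, funext fun ρ => isEmptyElim ρ⟩
  set r := u σ₀ * ε σ₀
  have hker : (K.B j).map (Int.cast : ℤ → ℝ) *ᵥ (u - r • ε) = 0 := by
    rw [mulVec_sub, mulVec_smul, hu, hεker, smul_zero, sub_zero]
  have h₀ : (u - r • ε) σ₀ = 0 := by
    simp only [Pi.sub_apply, Pi.smul_apply, smul_eq_mul, r, mul_assoc,
      ← abs_mul_abs_self (ε σ₀), hε]
    ring
  refine ⟨r, funext fun ρ => sub_eq_zero.1 (abs_eq_zero.1 ?_)⟩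
  exact (K.abs_eq_of_stronglyConnected hsc hclosed hker ρ σ₀).trans (by rw [h₀, abs_zero])

end SC

theorem stmt9_general (n j s : ℕ) (K : SC n) (hdim : K.dimIs (j + 1))
    (hsc : K.StronglyConnected j)
    (hclosed : ∀ τ : K.fdex j, K.ridgeDeg j τ = 2)
    (horient : ∃ z : K.fdex (j + 1) → ℤ, z ≠ 0 ∧ (K.B j).mulVec z = 0 ∧
      ∀ w : K.fdex (j + 1) → ℤ, (K.B j).mulVec w = 0 → ∃ c : ℤ, w = c • z)
    (hs : Fintype.card (K.fdex (j + 1)) = s) :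
    (polyFacets (symPoly (K.B j))).ncard =
      if s % 2 = 0 then Nat.choose s (s / 2)
      else s * Nat.choose (s - 1) ((s - 1) / 2) := by
  obtain ⟨z, hz0, hz, -⟩ := horient
  set A := (K.B j).map (Int.cast : ℤ → ℝ)
  obtain ⟨ε, hε, hεker⟩ := K.exists_orientation hsc hclosed hz0 hz
  have hcomb : ∀ t : K.fdex (j + 1) → ℝ, ∑ ρ, t ρ • ε ρ • Aᵀ ρ = A *ᵥ (t * ε) := fun t => by
    ext τ
    simp only [Finset.sum_apply, Pi.smul_apply, smul_eq_mul, mulVec, dotProduct, Pi.mul_apply,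
      transpose_apply]
    exact sum_congr rfl fun ρ _ => by ring
  have hrel : ∀ t : K.fdex (j + 1) → ℝ, ∑ ρ, t ρ • ε ρ • Aᵀ ρ = 0 → ∃ r, ∀ ρ, t ρ = r :=
    fun t ht => by
    obtain ⟨r, hr⟩ := K.eq_smul_of_mulVec_eq_zero hsc hclosed hε hεker (by rwa [← hcomb])
    exact ⟨r, fun ρ => mul_right_cancel₀ (fun h => by simpa [h] using hε ρ) (congrFun hr ρ)⟩
  have hsum : ∑ ρ, ε ρ • Aᵀ ρ = 0 := by simpa [← hεker] using hcomb 1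
  rw [show symPoly (K.B j) = symHull (fun ρ => ε ρ • Aᵀ ρ) from (symHull_smul_sign _ hε).symm,
    ncard_polyFacets_symHull hsum hrel (K.two_le_card_fdex hdim hclosed),
    ncard_setOf_isBalancedSign, hs]

/-- Let `Δ` be a connected closed orientable `d`-dimensional
pseudomanifold (`d = j+1 ≥ 1`) with `s` facets. Then the number of facets of `P_Δ`
is `C(2m,m)` if `s = 2m` and `(2m+1)·C(2m,m)` if `s = 2m+1`. -/
theorem stmt9 (n j s : ℕ) (K : SC n) (hdim : K.dimIs (j + 1)) (hpure : K.pure (j + 1))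
    (hsc : K.StronglyConnected j)
    (hclosed : ∀ τ : K.fdex j, K.ridgeDeg j τ = 2)
    (horient : ∃ z : K.fdex (j + 1) → ℤ, z ≠ 0 ∧ (K.B j).mulVec z = 0 ∧
      ∀ w : K.fdex (j + 1) → ℤ, (K.B j).mulVec w = 0 → ∃ c : ℤ, w = c • z)
    (hs : Fintype.card (K.fdex (j + 1)) = s) :
    (polyFacets (symPoly (K.B j))).ncard =
      if s % 2 = 0 then Nat.choose s (s / 2)
      else s * Nat.choose (s - 1) ((s - 1) / 2) :=
  stmt9_general n j s K hdim hsc hclosed horient hs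
end

section
/- Let Δ be a d-dimensional simplicial complex with H_d(Δ; ℤ) = 0. If H_{d−1}(Δ; ℤ) has q-torsion for some integer q ≥ 3, then the symmetric homology polytope P_Δ is not reflexive. -/
open Matrix BigOperators Pointwise

section Aux

variable {ι κ : Type*} [Fintype ι] [Fintype κ]

lemma dot_linear (y : ι → ℝ) : IsLinearMap ℝ (fun x : ι → ℝ => dot x y) := by
  constructor
  · intro a b; simp [dot, add_mul, Finset.sum_add_distrib]
  · intro c a; simp [dot, Finset.mul_sum, mul_assoc]

lemma dot_neg_left (a y : ι → ℝ) : dot (fun i => -(a i)) y = - dot a y := by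
  simp [dot, Finset.sum_neg_distrib]

lemma dot_col (A : Matrix ι κ ℤ) (y : ι → ℝ) (j : κ) :
    dot (fun i => ((A i j : ℝ))) y = ((A.map (Int.cast : ℤ → ℝ)).transpose.mulVec y) j := by
  simp [dot, Matrix.mulVec, dotProduct, Matrix.transpose_apply, Matrix.map_apply]

lemma dot_sum {T : Type*} (c : ι → ℝ) (t : Finset T) (w : T → ℝ) (z : T → (ι → ℝ)) :
    dot c (∑ k ∈ t, w k • z k) = ∑ k ∈ t, w k * dot c (z k) := by
  simp only [dot, Finset.sum_apply, Pi.smul_apply, smul_eq_mul, Finset.mul_sum]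
  rw [Finset.sum_comm]
  apply Finset.sum_congr rfl
  intro k _
  apply Finset.sum_congr rfl
  intro i _
  ring

lemma col_mem_symPoly (A : Matrix ι κ ℤ) (j : κ) :
    (fun i => ((A i j : ℝ))) ∈ symPoly A :=
  subset_convexHull ℝ _ ⟨j, Or.inl rfl⟩

lemma neg_col_mem_symPoly (A : Matrix ι κ ℤ) (j : κ) :
    (fun i => -((A i j : ℝ))) ∈ symPoly A :=
  subset_convexHull ℝ _ ⟨j, Or.inr rfl⟩

/-- the key lemma: if `A` has ℤ-independent columns and `symPoly A` is reflexive,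
then every sign vector is an integer combination of the rows of `A`. -/
lemma key_sign_vector [DecidableEq κ] (A : Matrix ι κ ℤ)
    (hH : Function.Injective A.mulVec)
    (hrefl : IsReflexive (symPoly A))
    (b : κ → ℤ) (hb : ∀ j, b j = 1 ∨ b j = -1) :
    ∃ y : ι → ℤ, A.transpose.mulVec y = b := by
  classical
  set Aρ : Matrix ι κ ℝ := A.map (Int.cast : ℤ → ℝ) with hAρ
  set G : Matrix κ κ ℤ := A.transpose * A with hG
  -- the Gram matrix has nonzero determinant
  have hGinj : ∀ v : κ → ℤ, G.mulVec v = 0 → v = 0 := by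
    intro v hv
    have h2 : v ⬝ᵥ (G.mulVec v) = 0 := by rw [hv]; simp
    have h3 : v ⬝ᵥ (G.mulVec v) = (A.mulVec v) ⬝ᵥ (A.mulVec v) := by
      rw [hG, ← Matrix.mulVec_mulVec, Matrix.dotProduct_mulVec, Matrix.vecMul_transpose]
    have h4 : A.mulVec v = 0 := by
      funext i
      have hsum : ∑ i, (A.mulVec v i) * (A.mulVec v i) = 0 := by
        rw [← h2, h3]; rfl
      have := (Finset.sum_eq_zero_iff_of_nonneg
        (fun i _ => mul_self_nonneg (A.mulVec v i))).mp hsum i (Finset.mem_univ i)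
      exact mul_self_eq_zero.mp this
    have := hH (a₁ := v) (a₂ := 0) (by rw [h4, Matrix.mulVec_zero])
    exact this
  have hGdet : G.det ≠ 0 := by
    intro h
    obtain ⟨v, hv0, hv⟩ := Matrix.exists_mulVec_eq_zero_iff.mpr h
    exact hv0 (hGinj v hv)
  set Gρ : Matrix κ κ ℝ := G.map (Int.cast : ℤ → ℝ) with hGρ
  have hGρdet : IsUnit Gρ.det := by
    have : Gρ.det = ((G.det : ℤ) : ℝ) := (RingHom.map_det (Int.castRingHom ℝ) G).symm
    rw [this]
    exact isUnit_iff_ne_zero.mpr (by exact_mod_cast hGdet)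
  set bρ : κ → ℝ := fun j => ((b j : ℝ)) with hbρ
  set z : κ → ℝ := Gρ⁻¹.mulVec bρ with hz
  have hGz : Gρ.mulVec z = bρ := by
    rw [hz, Matrix.mulVec_mulVec, Matrix.mul_nonsing_inv _ hGρdet, Matrix.one_mulVec]
  have hGsplit : Aρ.transpose * Aρ = Gρ := by
    rw [hAρ, hGρ, hG]
    rw [show (Int.cast : ℤ → ℝ) = ⇑(Int.castRingHom ℝ) from rfl, Matrix.map_mul,
      Matrix.transpose_map]
  set y₀ : ι → ℝ := Aρ.mulVec z with hy₀
  have hAy₀ : Aρ.transpose.mulVec y₀ = bρ := by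
    rw [hy₀, Matrix.mulVec_mulVec, hGsplit, hGz]
  -- y₀ lies in the polar dual
  have hy₀P : y₀ ∈ polarIn (symPoly A) := by
    constructor
    · have hrepr : y₀ = ∑ j, z j • (fun i => ((A i j : ℝ))) := by
        funext i
        simp [hy₀, Matrix.mulVec, dotProduct, hAρ, Matrix.map_apply,
          Finset.sum_apply, mul_comm]
      rw [hrepr]
      exact Submodule.sum_mem _ fun j _ => Submodule.smul_mem _ _
        (Submodule.subset_span (col_mem_symPoly A j))
    · intro p hp
      have hsub : symPoly A ⊆ {x | dot x y₀ ≤ 1} := by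
        apply convexHull_min _ (convex_halfSpace_le (dot_linear y₀) 1)
        rintro _ ⟨j, rfl | rfl⟩
        · rw [Set.mem_setOf_eq, dot_col A y₀ j, hAy₀]
          rcases hb j with h | h <;> simp [hbρ, h]
        · rw [Set.mem_setOf_eq, dot_neg_left, dot_col A y₀ j, hAy₀]
          rcases hb j with h | h <;> simp [hbρ, h]
      exact hsub hp
  -- the value functional
  set xw : ι → ℝ := fun i => ((A.mulVec b i : ℝ)) with hxw
  have hxwρ : xw = Aρ.mulVec bρ := by
    funext i
    simp [hxw, Matrix.mulVec, dotProduct, hAρ, Matrix.map_apply, hbρ]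
  -- value at lattice points of the polar
  have hlatt : ∀ y' ∈ latticePts (polarIn (symPoly A)),
      ∃ y'' : ι → ℤ, dot xw y' = ((b ⬝ᵥ (A.transpose.mulVec y'') : ℤ) : ℝ) ∧
        b ⬝ᵥ (A.transpose.mulVec y'') ≤ (Fintype.card κ : ℤ) ∧
        (b ⬝ᵥ (A.transpose.mulVec y'') = (Fintype.card κ : ℤ) →
          A.transpose.mulVec y'' = b) := by
    intro y' hy'
    obtain ⟨hy'P, hy'int⟩ := hy'
    choose y'' hy'' using hy'int
    have htj : ∀ j, |A.transpose.mulVec y'' j| ≤ 1 := by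
      intro j
      have hcol : dot (fun i => ((A i j : ℝ))) y' ≤ 1 := hy'P.2 _ (col_mem_symPoly A j)
      have hncol : dot (fun i => -((A i j : ℝ))) y' ≤ 1 := hy'P.2 _ (neg_col_mem_symPoly A j)
      rw [dot_neg_left] at hncol
      have hcast : dot (fun i => ((A i j : ℝ))) y' = ((A.transpose.mulVec y'' j : ℤ) : ℝ) := by
        have : dot (fun i => ((A i j : ℝ))) y' = ∑ i, ((A i j : ℝ)) * ((y'' i : ℝ)) := by
          apply Finset.sum_congr rfl; intro i _; rw [hy'' i]
        rw [this]
        push_cast [Matrix.mulVec, dotProduct, Matrix.transpose_apply]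
        rfl
      rw [hcast] at hcol hncol
      rw [abs_le]
      constructor <;> [skip; exact_mod_cast hcol]
      have : ((-1 : ℤ) : ℝ) ≤ ((A.transpose.mulVec y'' j : ℤ) : ℝ) := by
        push_cast; linarith
      exact_mod_cast this
    have hterm : ∀ j, b j * (A.transpose.mulVec y'' j) ≤ 1 := by
      intro j
      rcases hb j with h | h <;> rw [h] <;>
        [simpa using (abs_le.mp (htj j)).2; simpa using neg_le_neg (abs_le.mp (htj j)).1]
    refine ⟨y'', ?_, ?_, ?_⟩
    · have : dot xw y' = ∑ i, ((A.mulVec b i : ℝ)) * ((y'' i : ℝ)) := by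
        apply Finset.sum_congr rfl; intro i _; rw [hy'' i]
      rw [this]
      have : b ⬝ᵥ (A.transpose.mulVec y'') = (A.mulVec b) ⬝ᵥ y'' := by
        rw [Matrix.dotProduct_mulVec, Matrix.vecMul_transpose]
      rw [this]
      push_cast [dotProduct]
      rfl
    · calc b ⬝ᵥ (A.transpose.mulVec y'') = ∑ j, b j * (A.transpose.mulVec y'' j) := rfl
        _ ≤ ∑ _j : κ, (1 : ℤ) := Finset.sum_le_sum (fun j _ => hterm j)
        _ = (Fintype.card κ : ℤ) := by simp
    · intro heq
      have hsum : ∑ j, b j * (A.transpose.mulVec y'' j) = ∑ _j : κ, (1 : ℤ) := by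
        have : (∑ _j : κ, (1 : ℤ)) = (Fintype.card κ : ℤ) := by simp
        rw [this, ← heq]; rfl
      have hptw := (Finset.sum_eq_sum_iff_of_le (fun j _ => hterm j)).mp hsum
      funext j
      have := hptw j (Finset.mem_univ j)
      rcases hb j with h | h <;> rw [h] at this ⊢ <;> omega
  -- value at y₀ is the maximum
  have hFy₀ : dot xw y₀ = (Fintype.card κ : ℝ) := by
    rw [hxwρ]
    have : dot (Aρ.mulVec bρ) y₀ = bρ ⬝ᵥ (Aρ.transpose.mulVec y₀) := by
      show (Aρ.mulVec bρ) ⬝ᵥ y₀ = _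
      rw [Matrix.dotProduct_mulVec bρ Aρ.transpose y₀, Matrix.vecMul_transpose]
    rw [this, hAy₀]
    have : ∀ j, bρ j * bρ j = 1 := by
      intro j; rcases hb j with h | h <;> simp [hbρ, h]
    calc bρ ⬝ᵥ bρ = ∑ j, bρ j * bρ j := rfl
      _ = ∑ _j : κ, (1 : ℝ) := Finset.sum_congr rfl (fun j _ => this j)
      _ = (Fintype.card κ : ℝ) := by simp
  -- use reflexivity
  have hy₀conv : y₀ ∈ convexHull ℝ (latticePts (polarIn (symPoly A))) := by
    rw [← hrefl]; exact hy₀P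
  rw [convexHull_eq] at hy₀conv
  obtain ⟨T, t, w, zf, hw0, hw1, hzt, hcm⟩ := hy₀conv
  rw [Finset.centerMass_eq_of_sum_1 _ _ hw1] at hcm
  choose y'' hval hle hequ using fun k (hk : k ∈ t) => hlatt (zf k) (hzt k hk)
  -- find a lattice point achieving the maximum
  have hcomb : ∑ k ∈ t, w k * dot xw (zf k) = (Fintype.card κ : ℝ) := by
    rw [← dot_sum, hcm, hFy₀]
  have hexists : ∃ k, ∃ hk : k ∈ t, 0 < w k ∧
      b ⬝ᵥ (A.transpose.mulVec (y'' k hk)) = (Fintype.card κ : ℤ) := by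
    by_contra hno
    push_neg at hno
    obtain ⟨k₀, hk₀, hwk₀⟩ : ∃ k ∈ t, 0 < w k := by
      by_contra hall
      push_neg at hall
      have : ∑ k ∈ t, w k ≤ 0 := Finset.sum_nonpos (fun k hk => hall k hk)
      rw [hw1] at this; linarith
    have hltM : ∀ k (hk : k ∈ t), dot xw (zf k) ≤ (Fintype.card κ : ℝ) := by
      intro k hk
      rw [hval k hk]
      exact_mod_cast hle k hk
    have hstrict : dot xw (zf k₀) < (Fintype.card κ : ℝ) := by
      rw [hval k₀ hk₀]
      have h1 := hle k₀ hk₀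
      have h2 := hno k₀ hk₀ hwk₀
      have : b ⬝ᵥ (A.transpose.mulVec (y'' k₀ hk₀)) < (Fintype.card κ : ℤ) :=
        lt_of_le_of_ne h1 h2
      exact_mod_cast this
    have : ∑ k ∈ t, w k * dot xw (zf k) < ∑ k ∈ t, w k * (Fintype.card κ : ℝ) := by
      apply Finset.sum_lt_sum
      · intro k hk
        exact mul_le_mul_of_nonneg_left (hltM k hk) (hw0 k hk)
      · exact ⟨k₀, hk₀, by
          apply mul_lt_mul_of_pos_left hstrict hwk₀⟩
    rw [hcomb, ← Finset.sum_mul, hw1, one_mul] at this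
    exact lt_irrefl _ this
  obtain ⟨k, hk, _, hmax⟩ := hexists
  exact ⟨y'' k hk, hequ k hk hmax⟩

end Aux

/-- Let `Δ` be a `d`-dimensional simplicial complex (`d = i+2 ≥ 2`)
with `H_d(Δ;ℤ) = 0`. If `H_{d−1}(Δ;ℤ)` has `q`-torsion for some `q ≥ 3` (i.e. there is
a `(d−1)`-cycle `x` whose class has order exactly `q` modulo `im_ℤ ∂_d`), then `P_Δ`
is not reflexive. -/
theorem stmt12 (n i : ℕ) (K : SC n) (hdim : K.dimIs (i + 2))
    (hH : Function.Injective (K.B (i + 1)).mulVec)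
    (q : ℕ) (hq : 3 ≤ q)
    (x : K.fdex (i + 1) → ℤ)
    (hcyc : (K.B i).mulVec x = 0)
    (horder : ∀ k : ℕ, 0 < k → k < q →
      ¬ ∃ u : K.fdex (i + 2) → ℤ, (k : ℤ) • x = (K.B (i + 1)).mulVec u)
    (hqx : ∃ u : K.fdex (i + 2) → ℤ, (q : ℤ) • x = (K.B (i + 1)).mulVec u) :
    ¬ IsReflexive (symPoly (K.B (i + 1))) := by
  intro hrefl
  classical
  set A := K.B (i + 1) with hA
  obtain ⟨u, hu⟩ := hqx
  have hqZ : (q : ℤ) ≠ 0 := by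
    have : (0 : ℤ) < (q : ℤ) := by exact_mod_cast Nat.lt_of_lt_of_le (by norm_num) hq
    omega
  -- for each face j₀, q divides 2 * u j₀
  have hdvd : ∀ j₀ : K.fdex (i + 2), ∃ c : ℤ, 2 * u j₀ = (q : ℤ) * c := by
    intro j₀
    obtain ⟨y₁, hy₁⟩ := key_sign_vector A hH hrefl (fun _ => 1) (fun _ => Or.inl rfl)
    obtain ⟨y₂, hy₂⟩ := key_sign_vector A hH hrefl (fun j => if j = j₀ then -1 else 1)
      (fun j => by by_cases h : j = j₀ <;> simp [h])
    have hpair : ∀ y : K.fdex (i + 1) → ℤ,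
        u ⬝ᵥ (A.transpose.mulVec y) = (q : ℤ) * (x ⬝ᵥ y) := by
      intro y
      rw [Matrix.dotProduct_mulVec, Matrix.vecMul_transpose, ← hu,
        smul_dotProduct, smul_eq_mul]
    have h₁ : u ⬝ᵥ (fun _ : K.fdex (i + 2) => (1 : ℤ)) = (q : ℤ) * (x ⬝ᵥ y₁) := by
      rw [← hy₁]; exact hpair y₁
    have h₂ : u ⬝ᵥ (fun j : K.fdex (i + 2) => if j = j₀ then (-1 : ℤ) else 1) =
        (q : ℤ) * (x ⬝ᵥ y₂) := by
      rw [← hy₂]; exact hpair y₂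
    refine ⟨x ⬝ᵥ y₁ - x ⬝ᵥ y₂, ?_⟩
    have hdiff : u ⬝ᵥ (fun _ : K.fdex (i + 2) => (1 : ℤ)) -
        u ⬝ᵥ (fun j : K.fdex (i + 2) => if j = j₀ then (-1 : ℤ) else 1) = 2 * u j₀ := by
      simp only [dotProduct, ← Finset.sum_sub_distrib]
      have : ∀ j : K.fdex (i + 2), u j * 1 - u j * (if j = j₀ then (-1 : ℤ) else 1) =
          if j = j₀ then 2 * u j else 0 := by
        intro j; split <;> ring
      rw [Finset.sum_congr rfl (fun j _ => this j), Finset.sum_ite_eq' Finset.univ j₀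
        (fun j => 2 * u j)]
      simp
    rw [← hdiff, h₁, h₂]
    ring
  choose c hc using hdvd
  have h2x : ((2 : ℕ) : ℤ) • x = A.mulVec c := by
    have hqc : A.mulVec (fun j => (q : ℤ) * c j) = A.mulVec (fun j => 2 * u j) := by
      have hfun : (fun j => (q : ℤ) * c j) = fun j => 2 * u j :=
        funext fun j => (hc j).symm
      rw [hfun]
    have hL : A.mulVec (fun j => (q : ℤ) * c j) = (q : ℤ) • A.mulVec c := by
      rw [← Matrix.mulVec_smul]; rfl
    have hR : A.mulVec (fun j => 2 * u j) = (2 : ℤ) • A.mulVec u := by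
      rw [← Matrix.mulVec_smul]; rfl
    rw [hL, hR, ← hu] at hqc
    funext i₀
    have := congrFun hqc i₀
    simp only [Pi.smul_apply, smul_eq_mul] at this ⊢
    have : (q : ℤ) * (A.mulVec c i₀) = (q : ℤ) * (2 * x i₀) := by
      rw [this]; ring
    have := mul_left_cancel₀ hqZ this
    push_cast
    omega
  exact horder 2 (by norm_num) (by omega) ⟨c, h2x⟩
end
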